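/- arXiv:2201.02224 — 5 statements merged into one kernel-verified Lean document; each statement's English description precedes it below -/
import Mathlib

section
/- Let A be a ring with enough idempotents, {N_α}_{α∈S} a family of unital right A-modules, and F a finitely presented unital left A-module. Then the natural map R_A(∏_{α∈S} N_α) ⊗_A F → ∏_{α∈S} (N_α ⊗_A F) is an isomorphism, where ∏ denotes the product of abelian groups and R_A(∏ N_α) = ⊕_{i∈I} ∏_{α∈S} N_α e_i is the product in the category of unital right A-modules. -/
open MulOpposite

universe u v w w' w₂ w₃

namespace EIMod

/-- A premodule over a nonunital ring `A`: an additive group with an associative,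
biadditive scalar multiplication. -/
class PreMod (A : Type u) (M : Type w) [NonUnitalRing A] [AddCommGroup M] extends SMul A M where
  smul_add' : ∀ (a : A) (m n : M), a • (m + n) = a • m + a • n
  add_smul' : ∀ (a b : A) (m : M), (a + b) • m = a • m + b • m
  mul_smul' : ∀ (a b : A) (m : M), (a * b) • m = a • (b • m)

namespace PreMod

variable {A : Type u} [NonUnitalRing A]

section Lemmas

variable {M : Type w} [AddCommGroup M] [PreMod A M]

lemma psmul_zero (a : A) : a • (0 : M) = 0 := by
  have h := smul_add' a (0 : M) 0
  rw [add_zero] at h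
  exact (left_eq_add.mp h)

lemma psmul_neg (a : A) (m : M) : a • (-m) = -(a • m) := by
  have h := smul_add' a m (-m)
  rw [add_neg_cancel, psmul_zero] at h
  exact (eq_neg_of_add_eq_zero_right h.symm)

lemma pzero_smul (m : M) : (0 : A) • m = 0 := by
  have h := add_smul' (0 : A) 0 m
  rw [add_zero] at h
  exact (left_eq_add.mp h)

lemma pneg_smul (a : A) (m : M) : (-a) • m = -(a • m) := by
  have h := add_smul' a (-a) m
  rw [add_neg_cancel, pzero_smul] at h
  exact (eq_neg_of_add_eq_zero_right h.symm)

/-- Scalar multiplication by a fixed `a : A` as an additive map. -/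
def smulHom (M : Type w) [AddCommGroup M] [PreMod A M] (a : A) : M →+ M :=
  AddMonoidHom.mk' (fun m => a • m) (smul_add' a)

@[simp] lemma smulHom_apply (a : A) (m : M) : smulHom M a m = a • m := rfl

end Lemmas

instance : PreMod A A where
  smul := (· * ·)
  smul_add' := mul_add
  add_smul' := add_mul
  mul_smul' := mul_assoc

lemma smul_def (a b : A) : a • b = a * b := rfl

instance : PreMod Aᵐᵒᵖ A where
  smul a x := x * a.unop
  smul_add' a m n := add_mul m n a.unop
  add_smul' a b m := by show m * (a + b).unop = m * a.unop + m * b.unop; rw [unop_add, mul_add]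
  mul_smul' a b m := by
    show m * (a * b).unop = (m * b.unop) * a.unop
    rw [unop_mul, mul_assoc]

lemma op_smul_def (a : Aᵐᵒᵖ) (x : A) : a • x = x * a.unop := rfl

instance instPi {ι : Type v} (β : ι → Type w) [∀ i, AddCommGroup (β i)]
    [∀ i, PreMod A (β i)] : PreMod A (∀ i, β i) where
  smul a f i := a • f i
  smul_add' a f g := funext fun i => smul_add' a (f i) (g i)
  add_smul' a b f := funext fun i => add_smul' a b (f i)
  mul_smul' a b f := funext fun i => mul_smul' a b (f i)

lemma pi_smul_apply {ι : Type v} {β : ι → Type w} [∀ i, AddCommGroup (β i)]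
    [∀ i, PreMod A (β i)] (a : A) (f : ∀ i, β i) (i : ι) : (a • f) i = a • f i := rfl

noncomputable instance instFinsupp {σ : Type v} : PreMod A (σ →₀ A) where
  smul a f := Finsupp.mapRange (a * ·) (mul_zero a) f
  smul_add' a f g := by
    ext s
    simp [Finsupp.mapRange_apply, mul_add]
  add_smul' a b f := by
    ext s
    simp [Finsupp.mapRange_apply, add_mul]
  mul_smul' a b f := by
    ext s
    simp [Finsupp.mapRange_apply, mul_assoc]

lemma finsupp_smul_single {σ : Type v} (a : A) (s : σ) (b : A) :
    a • (Finsupp.single s b) = Finsupp.single s (a * b) := by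
  show Finsupp.mapRange (a * ·) (mul_zero a) (Finsupp.single s b) = _
  rw [Finsupp.mapRange_single]

end PreMod

open PreMod

variable (A : Type u) [NonUnitalRing A]

/-- The additive subgroup of `A`-linear additive maps between two premodules. -/
def LHom (M : Type w) (N : Type w') [AddCommGroup M] [AddCommGroup N]
    [PreMod A M] [PreMod A N] : AddSubgroup (M →+ N) where
  carrier := {f | ∀ (a : A) (m : M), f (a • m) = a • f m}
  add_mem' := by
    intro f g hf hg a m
    simp only [AddMonoidHom.add_apply, hf a m, hg a m, PreMod.smul_add']
  zero_mem' := by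
    intro a m
    simp [PreMod.psmul_zero]
  neg_mem' := by
    intro f hf a m
    simp [hf a m, PreMod.psmul_neg]

lemma mem_LHom {M : Type w} {N : Type w'} [AddCommGroup M] [AddCommGroup N]
    [PreMod A M] [PreMod A N] (f : M →+ N) :
    f ∈ LHom A M N ↔ ∀ (a : A) (m : M), f (a • m) = a • f m := Iff.rfl

/-- A complete family of orthogonal idempotents for a nonunital ring:
`A` is a ring with enough idempotents. -/
class EnoughIdems {I : Type v} (e : I → A) : Prop where
  idem : ∀ i, e i * e i = e i
  orth : ∀ i j, i ≠ j → e i * e j = 0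
  memLeft : ∀ a : A, a ∈ AddSubgroup.closure {x : A | ∃ i b, x = e i * b}
  memRight : ∀ a : A, a ∈ AddSubgroup.closure {x : A | ∃ i b, x = b * e i}

section OpInstance

variable {A}

lemma op_mem_closure {s : Set A} {t : Set Aᵐᵒᵖ} (hst : ∀ x ∈ s, op x ∈ t) {a : A}
    (ha : a ∈ AddSubgroup.closure s) : op a ∈ AddSubgroup.closure t := by
  refine AddSubgroup.closure_induction
    (fun x hx => AddSubgroup.subset_closure (hst x hx)) (by rw [op_zero]; exact zero_mem _)
    (fun x y _ _ hx hy => by rw [op_add]; exact add_mem hx hy)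
    (fun x _ hx => by rw [op_neg]; exact neg_mem hx) ha

lemma unop_mem_closure {s : Set Aᵐᵒᵖ} {t : Set A} (hst : ∀ x ∈ s, unop x ∈ t) {a : Aᵐᵒᵖ}
    (ha : a ∈ AddSubgroup.closure s) : unop a ∈ AddSubgroup.closure t := by
  refine AddSubgroup.closure_induction
    (fun x hx => AddSubgroup.subset_closure (hst x hx)) (by rw [unop_zero]; exact zero_mem _)
    (fun x y _ _ hx hy => by rw [unop_add]; exact add_mem hx hy)
    (fun x _ hx => by rw [unop_neg]; exact neg_mem hx) ha

instance EnoughIdems.instOp {I : Type v} (e : I → A) [EnoughIdems A e] :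
    EnoughIdems Aᵐᵒᵖ (fun i => op (e i)) where
  idem i := by rw [← op_mul, idem (e := e) i]
  orth i j h := by
    rw [← op_mul, orth (e := e) j i (Ne.symm h), op_zero]
  memLeft a := by
    have := op_mem_closure (s := {x : A | ∃ i b, x = b * e i})
      (t := {x : Aᵐᵒᵖ | ∃ i b, x = op (e i) * b}) ?_ (memRight (e := e) a.unop)
    · simpa using this
    · rintro x ⟨i, b, rfl⟩
      exact ⟨i, op b, by rw [← op_mul]⟩
  memRight a := by
    have := op_mem_closure (s := {x : A | ∃ i b, x = e i * b})
      (t := {x : Aᵐᵒᵖ | ∃ i b, x = b * op (e i)}) ?_ (memLeft (e := e) a.unop)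
    · simpa using this
    · rintro x ⟨i, b, rfl⟩
      exact ⟨i, op b, by rw [← op_mul]⟩

end OpInstance

section RA

variable {I : Type v} (e : I → A)

/-- `R_A(M) = ⊕ᵢ eᵢ M`, the largest unital submodule of a premodule `M`. -/
def RA (M : Type w) [AddCommGroup M] [PreMod A M] : AddSubgroup M :=
  AddSubgroup.closure {x : M | ∃ (i : I) (y : M), x = e i • y}

variable {M : Type w} [AddCommGroup M] [PreMod A M]

lemma smul_mem_RA [EnoughIdems A e] (a : A) {m : M} (hm : m ∈ RA A e M) :
    a • m ∈ RA A e M := by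
  have key : ∀ b : A, b ∈ AddSubgroup.closure {x : A | ∃ i c, x = e i * c} →
      ∀ y : M, b • y ∈ RA A e M := by
    intro b hb
    refine AddSubgroup.closure_induction ?_ ?_ ?_ ?_ hb
    · rintro x ⟨i, c, rfl⟩ y
      rw [PreMod.mul_smul']
      exact AddSubgroup.subset_closure ⟨i, c • y, rfl⟩
    · intro y
      rw [PreMod.pzero_smul]
      exact zero_mem _
    · intro x y _ _ hx hy z
      rw [PreMod.add_smul']
      exact add_mem (hx z) (hy z)
    · intro x _ hx y
      rw [PreMod.pneg_smul]
      exact neg_mem (hx y)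
  refine AddSubgroup.closure_induction ?_ ?_ ?_ ?_ hm
  · rintro x ⟨i, y, rfl⟩
    rw [← PreMod.mul_smul']
    exact key _ (EnoughIdems.memLeft (e := e) (a * e i)) y
  · rw [PreMod.psmul_zero]
    exact zero_mem _
  · intro x y _ _ hx hy
    rw [PreMod.smul_add']
    exact add_mem hx hy
  · intro x _ hx
    rw [PreMod.psmul_neg]
    exact neg_mem hx

instance RA.instPreMod [EnoughIdems A e] : PreMod A ↥(RA A e M) where
  smul a x := ⟨a • x.1, smul_mem_RA A e a x.2⟩
  smul_add' a x y := Subtype.ext (PreMod.smul_add' a x.1 y.1)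
  add_smul' a b x := Subtype.ext (PreMod.add_smul' a b x.1)
  mul_smul' a b x := Subtype.ext (PreMod.mul_smul' a b x.1)

lemma RA.coe_smul [EnoughIdems A e] (a : A) (x : ↥(RA A e M)) :
    ((a • x : ↥(RA A e M)) : M) = a • (x : M) := rfl

/-- A premodule is unital when it coincides with its largest unital submodule. -/
def IsUnital (M : Type w) [AddCommGroup M] [PreMod A M] : Prop :=
  ∀ m : M, m ∈ RA A e M

end RA

section Ideals

/-- The left ideal `A·u = {x | x·u = x}` (for `u` idempotent), as a left premodule. -/
def rIdl (u : A) : AddSubgroup A where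
  carrier := {x | x * u = x}
  zero_mem' := zero_mul u
  add_mem' := by
    intro x y hx hy
    show (x + y) * u = x + y
    rw [add_mul, hx, hy]
  neg_mem' := by
    intro x hx
    show (-x) * u = -x
    rw [neg_mul, hx]

instance rIdl.instPreMod (u : A) : PreMod A ↥(rIdl A u) where
  smul a x := ⟨a * x.1, by
    have hx : x.1 * u = x.1 := x.2
    show (a * x.1) * u = a * x.1
    rw [mul_assoc, hx]⟩
  smul_add' a x y := Subtype.ext (mul_add a x.1 y.1)
  add_smul' a b x := Subtype.ext (add_mul a b x.1)
  mul_smul' a b x := Subtype.ext (mul_assoc a b x.1)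

/-- The right ideal `u·A = {x | u·x = x}` (for `u` idempotent), as a right premodule. -/
def eIdl (u : A) : AddSubgroup A where
  carrier := {x | u * x = x}
  zero_mem' := mul_zero u
  add_mem' := by
    intro x y hx hy
    show u * (x + y) = x + y
    rw [mul_add, hx, hy]
  neg_mem' := by
    intro x hx
    show u * (-x) = -x
    rw [mul_neg, hx]

instance eIdl.instPreMod (u : A) : PreMod Aᵐᵒᵖ ↥(eIdl A u) where
  smul a x := ⟨x.1 * a.unop, by
    have hx : u * x.1 = x.1 := x.2
    show u * (x.1 * a.unop) = x.1 * a.unop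
    rw [← mul_assoc, hx]⟩
  smul_add' a x y := Subtype.ext (add_mul x.1 y.1 a.unop)
  add_smul' a b x := Subtype.ext (by show x.1 * (a + b).unop = x.1 * a.unop + x.1 * b.unop; rw [unop_add, mul_add])
  mul_smul' a b x := Subtype.ext (by show x.1 * (a * b).unop = (x.1 * b.unop) * a.unop; rw [unop_mul, mul_assoc])

/-- The image `u•M` of scalar multiplication by `u`, as an additive subgroup. -/
def eSMulRange (u : A) (M : Type w) [AddCommGroup M] [PreMod A M] : AddSubgroup M :=
  (PreMod.smulHom M u).range

end Ideals

end EIMod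
namespace EIMod

open PreMod MulOpposite

section Tensor

variable (A : Type u) [NonUnitalRing A]
variable (N : Type w) [AddCommGroup N] [PreMod Aᵐᵒᵖ N]
variable (M : Type w') [AddCommGroup M] [PreMod A M]

/-- Bilinearity and balancing relations defining the tensor product `N ⊗_A M`. -/
def TensorRels : AddSubgroup (FreeAbelianGroup (N × M)) :=
  AddSubgroup.closure
    ({z | ∃ (n₁ : N) (n₂ : N) (m : M), z = FreeAbelianGroup.of (n₁ + n₂, m)
        - FreeAbelianGroup.of (n₁, m) - FreeAbelianGroup.of (n₂, m)} ∪
     {z | ∃ (n : N) (m₁ : M) (m₂ : M), z = FreeAbelianGroup.of (n, m₁ + m₂)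
        - FreeAbelianGroup.of (n, m₁) - FreeAbelianGroup.of (n, m₂)} ∪
     {z | ∃ (n : N) (a : A) (m : M), z = FreeAbelianGroup.of (op a • n, m)
        - FreeAbelianGroup.of (n, a • m)})

/-- The tensor product `N ⊗_A M` of a right `A`-premodule and a left `A`-premodule. -/
def Tensor : Type max w w' := FreeAbelianGroup (N × M) ⧸ TensorRels A N M

instance : AddCommGroup (Tensor A N M) :=
  inferInstanceAs (AddCommGroup (FreeAbelianGroup (N × M) ⧸ TensorRels A N M))

/-- The canonical generator `n ⊗ m` of `N ⊗_A M`. -/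
def Tensor.mk (n : N) (m : M) : Tensor A N M :=
  QuotientAddGroup.mk (FreeAbelianGroup.of (n, m))

variable {A N M}
variable {N' : Type w₂} [AddCommGroup N'] [PreMod Aᵐᵒᵖ N']
variable {M' : Type w₃} [AddCommGroup M'] [PreMod A M']

/-- Functoriality of the tensor product in both variables, with respect to `A`-linear maps. -/
noncomputable def Tensor.map (f : N →+ N') (g : M →+ M')
    (hf : ∀ (a : A) (n : N), f (op a • n) = op a • f n)
    (hg : ∀ (a : A) (m : M), g (a • m) = a • g m) :
    Tensor A N M →+ Tensor A N' M' :=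
  QuotientAddGroup.map _ _ (FreeAbelianGroup.lift fun p => FreeAbelianGroup.of (f p.1, g p.2))
    (by
      refine (AddSubgroup.closure_le _).mpr ?_
      rintro z ((⟨n₁, n₂, m, rfl⟩ | ⟨n, m₁, m₂, rfl⟩) | ⟨n, a, m, rfl⟩) <;>
        refine AddSubgroup.mem_comap.mpr ?_
      · rw [map_sub, map_sub, FreeAbelianGroup.lift_apply_of, FreeAbelianGroup.lift_apply_of,
          FreeAbelianGroup.lift_apply_of]
        exact AddSubgroup.subset_closure
          (Or.inl (Or.inl ⟨f n₁, f n₂, g m, by rw [map_add]⟩))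
      · rw [map_sub, map_sub, FreeAbelianGroup.lift_apply_of, FreeAbelianGroup.lift_apply_of,
          FreeAbelianGroup.lift_apply_of]
        exact AddSubgroup.subset_closure
          (Or.inl (Or.inr ⟨f n, g m₁, g m₂, by rw [map_add]⟩))
      · rw [map_sub, FreeAbelianGroup.lift_apply_of, FreeAbelianGroup.lift_apply_of]
        exact AddSubgroup.subset_closure
          (Or.inr ⟨f n, a, g m, by rw [hf, hg]⟩))

lemma Tensor.map_mk (f : N →+ N') (g : M →+ M')
    (hf : ∀ (a : A) (n : N), f (op a • n) = op a • f n)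
    (hg : ∀ (a : A) (m : M), g (a • m) = a • g m) (n : N) (m : M) :
    Tensor.map f g hf hg (Tensor.mk A N M n m) = Tensor.mk A N' M' (f n) (g m) := by
  show QuotientAddGroup.mk (s := TensorRels A N' M')
    ((FreeAbelianGroup.lift fun p => FreeAbelianGroup.of (f p.1, g p.2))
      (FreeAbelianGroup.of (n, m))) = _
  rw [FreeAbelianGroup.lift_apply_of]
  rfl

end Tensor

section TorExt

variable (A : Type u) [NonUnitalRing A] {I : Type v} (e : I → A)
variable (M : Type w) [AddCommGroup M] [PreMod A M]

/-- The canonical `A`-linear surjection from the canonical free cover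
`(I × M) →₀ A` onto a unital module `M`, `single (i, m) a ↦ (a·eᵢ)·m`. -/
noncomputable def covHom : ((I × M) →₀ A) →+ M :=
  Finsupp.liftAddHom (fun p =>
    AddMonoidHom.mk' (fun a => (a * e p.1) • p.2)
      (fun a b => by
        show ((a + b) * e p.1) • p.2 = (a * e p.1) • p.2 + (b * e p.1) • p.2
        rw [add_mul, PreMod.add_smul']))

lemma covHom_single (p : I × M) (a : A) :
    covHom A e M (Finsupp.single p a) = (a * e p.1) • p.2 := by
  rw [covHom, Finsupp.liftAddHom_apply_single]
  rfl

lemma covHom_linear (a : A) (f : (I × M) →₀ A) :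
    covHom A e M (a • f) = a • covHom A e M f := by
  induction f using Finsupp.induction with
  | zero => rw [PreMod.psmul_zero, map_zero, PreMod.psmul_zero]
  | single_add p b f _ _ ih =>
    rw [PreMod.smul_add', map_add, map_add, PreMod.smul_add', ih,
      PreMod.finsupp_smul_single, covHom_single, covHom_single, mul_assoc,
      PreMod.mul_smul']

/-- The first syzygy of the canonical free cover of `M`. -/
noncomputable def KK : AddSubgroup ((I × M) →₀ A) := (covHom A e M).ker

noncomputable instance KK.instPreMod : PreMod A ↥(KK A e M) where
  smul a x := ⟨a • x.1, by
    have hx : covHom A e M x.1 = 0 := x.2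
    show covHom A e M (a • x.1) = 0
    rw [covHom_linear, hx, PreMod.psmul_zero]⟩
  smul_add' a x y := Subtype.ext (PreMod.smul_add' a x.1 y.1)
  add_smul' a b x := Subtype.ext (PreMod.add_smul' a b x.1)
  mul_smul' a b x := Subtype.ext (PreMod.mul_smul' a b x.1)

variable (N : Type w') [AddCommGroup N] [PreMod Aᵐᵒᵖ N]

/-- The map `N ⊗_A K → N ⊗_A (⊕ A·eᵢ)` induced by the first syzygy of `M`. -/
noncomputable def torMap : Tensor A N ↥(KK A e M) →+ Tensor A N ((I × M) →₀ A) :=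
  Tensor.map (AddMonoidHom.id N) ((KK A e M).subtype) (fun _ _ => rfl) (fun _ _ => rfl)

/-- `Tor₁^A(N, M)`, computed using the canonical free presentation of `M`. -/
noncomputable def Tor1 : AddSubgroup (Tensor A N ↥(KK A e M)) := (torMap A e M N).ker

variable (X : Type w') [AddCommGroup X] [PreMod A X]

/-- Restriction of `A`-linear maps along the inclusion of the first syzygy of `M`. -/
noncomputable def resHom :
    ↥(LHom A ((I × M) →₀ A) X) →+ ↥(LHom A ↥(KK A e M) X) :=
  AddMonoidHom.mk'
    (fun g => ⟨((g : ((I × M) →₀ A) →+ X)).comp (KK A e M).subtype,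
      fun a k => (g.2 : ∀ (a : A) (y : (I × M) →₀ A), (g : ((I × M) →₀ A) →+ X) (a • y)
        = a • (g : ((I × M) →₀ A) →+ X) y) a k.1⟩)
    (fun g g' => Subtype.ext (AddMonoidHom.ext (fun k => rfl)))

/-- `Ext¹_A(M, X)`, computed using the canonical free presentation of `M`. -/
noncomputable def Ext1 :=
  (↥(LHom A ↥(KK A e M) X)) ⧸ (resHom A e M X).range

noncomputable instance : AddCommGroup (Ext1 A e M X) :=
  inferInstanceAs (AddCommGroup ((↥(LHom A ↥(KK A e M) X)) ⧸ (resHom A e M X).range))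

end TorExt

section Character

/-- The divisible group `ℚ/ℤ`. -/
abbrev QZ : Type := AddCircle (1 : ℚ)

variable (A : Type u) [NonUnitalRing A] {I : Type v} (e : I → A)
variable (N : Type w) [AddCommGroup N] [PreMod Aᵐᵒᵖ N]

/-- The full character premodule `Hom_ℤ(N, ℚ/ℤ)` of a right `A`-premodule `N`,
with action `(a·f)(n) = f(n·a)`. -/
instance instCharPreMod : PreMod A (N →+ QZ) where
  smul a f := f.comp (PreMod.smulHom N (op a))
  smul_add' a f g := by
    show (f + g).comp _ = f.comp _ + g.comp _
    rw [AddMonoidHom.add_comp]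
  add_smul' a b f := by
    ext n
    show f (op (a + b) • n) = f (op a • n) + f (op b • n)
    rw [op_add, PreMod.add_smul', map_add]
  mul_smul' a b f := by
    ext n
    show f (op (a * b) • n) = f (op b • (op a • n))
    rw [op_mul, PreMod.mul_smul']

lemma char_smul_apply (a : A) (f : N →+ QZ) (n : N) :
    (a • f) n = f (op a • n) := rfl

/-- The unital character module `N⁺ = ⊕ᵢ Hom_ℤ(N·eᵢ, ℚ/ℤ) = R_A(Hom_ℤ(N, ℚ/ℤ))`. -/
noncomputable abbrev CharMod [EnoughIdems A e] : Type w :=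
  ↥(RA A e (N →+ QZ))

end Character

section FPn

variable (A : Type u) [NonUnitalRing A] {I : Type v} (e : I → A)

/-- A finite direct sum of standard left ideals `A·u j`. -/
abbrev FinFree {k : ℕ} (u : Fin k → A) : Type u := ∀ j : Fin k, ↥(rIdl A (u j))

/-- A left premodule over a ring with enough idempotents is of type `FPₙ` if it admits an
exact resolution `Pₙ → ⋯ → P₀ → F → 0` whose terms are finite direct sums of the standard
projective modules `A·eᵢ`. -/
def IsFPn (n : ℕ) (F : Type w) [AddCommGroup F] [PreMod A F] : Prop :=
  ∃ (k : ℕ → ℕ) (ι : ∀ s : ℕ, Fin (k s) → I)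
    (d : ∀ s : ℕ, ↥(LHom A (FinFree A fun j => e (ι (s + 1) j))
          (FinFree A fun j => e (ι s j))))
    (g : ↥(LHom A (FinFree A fun j => e (ι 0 j)) F)),
    Function.Surjective ⇑(g : (FinFree A fun j => e (ι 0 j)) →+ F) ∧
    (0 < n → AddMonoidHom.range
        ((d 0 : (FinFree A fun j => e (ι 1 j)) →+ (FinFree A fun j => e (ι 0 j))))
      = AddMonoidHom.ker (g : (FinFree A fun j => e (ι 0 j)) →+ F)) ∧
    (∀ s : ℕ, s + 1 < n → AddMonoidHom.range
        ((d (s + 1) : (FinFree A fun j => e (ι (s + 2) j)) →+ (FinFree A fun j => e (ι (s + 1) j))))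
      = AddMonoidHom.ker
        ((d s : (FinFree A fun j => e (ι (s + 1) j)) →+ (FinFree A fun j => e (ι s j)))))

end FPn

end EIMod

open EIMod PreMod MulOpposite

set_option maxHeartbeats 1000000

/-- The canonical map `R_A(∏_α N_α) ⊗_A F → N_α ⊗_A F` induced by the `α`-th projection. -/
noncomputable def projTensor
    (A : Type u) [NonUnitalRing A] {I : Type v} (e : I → A) [EnoughIdems A e]
    (S : Type w) (N : S → Type u) [∀ α, AddCommGroup (N α)] [∀ α, PreMod Aᵐᵒᵖ (N α)]
    (F : Type u) [AddCommGroup F] [PreMod A F] (α : S) :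
    Tensor A (↥(RA Aᵐᵒᵖ (fun i => op (e i)) (∀ β, N β))) F →+ Tensor A (N α) F :=
  Tensor.map (A := A) (N' := N α)
    (AddMonoidHom.mk' (fun x : ↥(RA Aᵐᵒᵖ (fun i => op (e i)) (∀ β, N β)) => (x : ∀ β, N β) α)
      (fun x y => rfl))
    (AddMonoidHom.id F) (fun a n => by rfl) (fun a m => by rfl)

/-!
Both sides of the comparison map are right exact in the left module: the tensor product is
right exact, and a product of exact sequences of abelian groups is exact. For a finite free
module `⊕ⱼ A·uⱼ` one has `X ⊗_A (⊕ⱼ A·uⱼ) ≅ ⊕ⱼ X·uⱼ`, and `R_A(∏_α N_α)·eᵢ = ∏_α N_α·eᵢ`,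
so the comparison map is bijective on the two free terms of a finite presentation of `F`.
The five lemma then gives bijectivity for `F`.
-/

theorem Function.Exact.piMap {ι : Type*} {M N P : ι → Type*} [∀ i, Zero (P i)]
    {f : ∀ i, M i → N i} {g : ∀ i, N i → P i} (h : ∀ i, Function.Exact (f i) (g i)) :
    Function.Exact (Pi.map f) (Pi.map g) := by
  intro y
  simp only [funext_iff, Pi.map_apply, Pi.zero_apply, h _ _, Set.mem_range]
  exact Classical.skolem

namespace EIMod

namespace FinFree

variable {A : Type u} [NonUnitalRing A] {k : ℕ} {u : Fin k → A}

noncomputable def single (hu : ∀ j, u j * u j = u j) (j : Fin k) : FinFree A u :=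
  Pi.single j ⟨u j, hu j⟩

theorem sum_smul_single (hu : ∀ j, u j * u j = u j) (p : FinFree A u) :
    ∑ j, (p j : A) • single hu j = p := by
  funext j
  rw [Finset.sum_apply, Finset.sum_eq_single_of_mem j (Finset.mem_univ j)]
  · rw [pi_smul_apply, single, Pi.single_eq_same]
    exact Subtype.ext (p j).2
  · intro j' _ hj'
    rw [pi_smul_apply, single, Pi.single_eq_of_ne' hj', psmul_zero]

end FinFree

namespace Tensor

section Basic

variable {A : Type u} [NonUnitalRing A]
variable {N : Type w} [AddCommGroup N] [PreMod Aᵐᵒᵖ N]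
variable {M : Type w'} [AddCommGroup M] [PreMod A M]

@[elab_as_elim]
theorem induction_on {P : Tensor A N M → Prop} (z : Tensor A N M) (h0 : P 0)
    (hmk : ∀ n m, P (Tensor.mk A N M n m)) (hneg : ∀ z, P z → P (-z))
    (hadd : ∀ z w, P z → P w → P (z + w)) : P z := by
  induction z using QuotientAddGroup.induction_on with | H x => ?_
  induction x using FreeAbelianGroup.induction_on with
  | zero => exact h0
  | of p => exact hmk p.1 p.2
  | neg x hx => exact hneg _ hx
  | add x y hx hy => exact hadd _ _ hx hy

theorem mk_add_left (n₁ n₂ : N) (m : M) :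
    Tensor.mk A N M (n₁ + n₂) m = Tensor.mk A N M n₁ m + Tensor.mk A N M n₂ m := by
  have h : (QuotientAddGroup.mk (FreeAbelianGroup.of (n₁ + n₂, m)
      - FreeAbelianGroup.of (n₁, m) - FreeAbelianGroup.of (n₂, m)) : Tensor A N M) = 0 :=
    (QuotientAddGroup.eq_zero_iff _).mpr
      (AddSubgroup.subset_closure (Or.inl (Or.inl ⟨n₁, n₂, m, rfl⟩)))
  rwa [QuotientAddGroup.mk_sub, QuotientAddGroup.mk_sub, sub_sub, sub_eq_zero] at h

theorem mk_add_right (n : N) (m₁ m₂ : M) :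
    Tensor.mk A N M n (m₁ + m₂) = Tensor.mk A N M n m₁ + Tensor.mk A N M n m₂ := by
  have h : (QuotientAddGroup.mk (FreeAbelianGroup.of (n, m₁ + m₂)
      - FreeAbelianGroup.of (n, m₁) - FreeAbelianGroup.of (n, m₂)) : Tensor A N M) = 0 :=
    (QuotientAddGroup.eq_zero_iff _).mpr
      (AddSubgroup.subset_closure (Or.inl (Or.inr ⟨n, m₁, m₂, rfl⟩)))
  rwa [QuotientAddGroup.mk_sub, QuotientAddGroup.mk_sub, sub_sub, sub_eq_zero] at h

theorem mk_op_smul (a : A) (n : N) (m : M) :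
    Tensor.mk A N M (op a • n) m = Tensor.mk A N M n (a • m) := by
  have h : (QuotientAddGroup.mk (FreeAbelianGroup.of (op a • n, m)
      - FreeAbelianGroup.of (n, a • m)) : Tensor A N M) = 0 :=
    (QuotientAddGroup.eq_zero_iff _).mpr (AddSubgroup.subset_closure (Or.inr ⟨n, a, m, rfl⟩))
  rwa [QuotientAddGroup.mk_sub, sub_eq_zero] at h

def mkRight (n : N) : M →+ Tensor A N M :=
  AddMonoidHom.mk' (Tensor.mk A N M n) (mk_add_right n)

@[simp] theorem mkRight_apply (n : N) (m : M) : mkRight n m = Tensor.mk A N M n m := rfl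

noncomputable def lift {T : Type*} [AddCommGroup T] (b : N → M → T)
    (hadd_left : ∀ n₁ n₂ m, b (n₁ + n₂) m = b n₁ m + b n₂ m)
    (hadd_right : ∀ n m₁ m₂, b n (m₁ + m₂) = b n m₁ + b n m₂)
    (hsmul : ∀ (a : A) n m, b (op a • n) m = b n (a • m)) :
    Tensor A N M →+ T :=
  QuotientAddGroup.lift _ (FreeAbelianGroup.lift fun p => b p.1 p.2) <| by
    refine (AddSubgroup.closure_le _).mpr ?_
    rintro z ((⟨n₁, n₂, m, rfl⟩ | ⟨n, m₁, m₂, rfl⟩) | ⟨n, a, m, rfl⟩) <;>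
      simp only [SetLike.mem_coe, AddMonoidHom.mem_ker, map_sub, FreeAbelianGroup.lift_apply_of]
    · rw [hadd_left]; abel
    · rw [hadd_right]; abel
    · rw [hsmul, sub_self]

@[simp] theorem lift_mk {T : Type*} [AddCommGroup T] (b : N → M → T)
    (hadd_left : ∀ n₁ n₂ m, b (n₁ + n₂) m = b n₁ m + b n₂ m)
    (hadd_right : ∀ n m₁ m₂, b n (m₁ + m₂) = b n m₁ + b n m₂)
    (hsmul : ∀ (a : A) n m, b (op a • n) m = b n (a • m)) (n : N) (m : M) :
    lift b hadd_left hadd_right hsmul (Tensor.mk A N M n m) = b n m :=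
  FreeAbelianGroup.lift_apply_of _ _

theorem addMonoidHom_ext {T : Type*} [AddCommGroup T] {φ ψ : Tensor A N M →+ T}
    (h : ∀ n m, φ (Tensor.mk A N M n m) = ψ (Tensor.mk A N M n m)) : φ = ψ := by
  ext z
  induction z using induction_on with
  | h0 => simp
  | hmk n m => exact h n m
  | hneg z hz => rw [map_neg, map_neg, hz]
  | hadd z w hz hw => rw [map_add, map_add, hz, hw]

variable {N' : Type w₂} [AddCommGroup N'] [PreMod Aᵐᵒᵖ N']
variable {M' : Type w₃} [AddCommGroup M'] [PreMod A M']

theorem map_surjective {f : N →+ N'} {g : M →+ M'}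
    (hf : ∀ (a : A) (n : N), f (op a • n) = op a • f n)
    (hg : ∀ (a : A) (m : M), g (a • m) = a • g m)
    (hfs : Function.Surjective f) (hgs : Function.Surjective g) :
    Function.Surjective (Tensor.map f g hf hg) := by
  intro z
  induction z using induction_on with
  | h0 => exact ⟨0, map_zero _⟩
  | hmk n m =>
    obtain ⟨n, rfl⟩ := hfs n
    obtain ⟨m, rfl⟩ := hgs m
    exact ⟨Tensor.mk A N M n m, Tensor.map_mk f g hf hg n m⟩
  | hneg z hz => exact (Tensor.map f g hf hg).range.neg_mem hz
  | hadd z w hz hw => exact (Tensor.map f g hf hg).range.add_mem hz hw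

theorem map_comp_map_id (f : N →+ N') (g : M →+ M')
    (hf : ∀ (a : A) (n : N), f (op a • n) = op a • f n)
    (hg : ∀ (a : A) (m : M), g (a • m) = a • g m) :
    (Tensor.map f (AddMonoidHom.id M') hf fun _ _ => rfl).comp
        (Tensor.map (AddMonoidHom.id N) g (fun _ _ => rfl) hg) =
      (Tensor.map (AddMonoidHom.id N') g (fun _ _ => rfl) hg).comp
        (Tensor.map f (AddMonoidHom.id M) hf fun _ _ => rfl) :=
  addMonoidHom_ext fun n m => by simp only [AddMonoidHom.comp_apply, Tensor.map_mk]; rfl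

end Basic

section RightExact

variable {A : Type u} [NonUnitalRing A]
variable {N : Type w} [AddCommGroup N] [PreMod Aᵐᵒᵖ N]
variable {P₁ : Type w'} [AddCommGroup P₁] [PreMod A P₁]
variable {P₀ : Type w₂} [AddCommGroup P₀] [PreMod A P₀]
variable {d : P₁ →+ P₀} (hd : ∀ (a : A) (p : P₁), d (a • p) = a • d p)

theorem mk_sub_mk_mem_range_map {F : Type*} [AddCommGroup F] {g : P₀ →+ F}
    (hdg : Function.Exact d g) (n : N) {p p' : P₀} (h : g p = g p') :
    Tensor.mk A N P₀ n p - Tensor.mk A N P₀ n p' ∈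
      (Tensor.map (AddMonoidHom.id N) d (fun _ _ => rfl) hd).range := by
  obtain ⟨q, hq⟩ := (hdg (p - p')).mp (by rw [map_sub, h, sub_self])
  refine ⟨Tensor.mk A N P₁ n q, ?_⟩
  rw [Tensor.map_mk, AddMonoidHom.id_apply, hq, ← mkRight_apply, map_sub]
  rfl

variable {F : Type w₃} [AddCommGroup F] [PreMod A F]
variable {g : P₀ →+ F} (hg : ∀ (a : A) (p : P₀), g (a • p) = a • g p)

theorem exists_comp_map_id_eq_mk (hdg : Function.Exact d g) (hgs : Function.Surjective g) :
    ∃ h : Tensor A N F →+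
        Tensor A N P₀ ⧸ (Tensor.map (AddMonoidHom.id N) d (fun _ _ => rfl) hd).range,
      ∀ x, h (Tensor.map (AddMonoidHom.id N) g (fun _ _ => rfl) hg x) = QuotientAddGroup.mk x := by
  set R := (Tensor.map (AddMonoidHom.id N) d (fun _ _ => rfl) hd).range
  set s := Function.surjInv hgs
  have hs : ∀ f, g (s f) = f := Function.surjInv_eq hgs
  have hmk : ∀ n {p p'}, g p = g p' →
      (QuotientAddGroup.mk (Tensor.mk A N P₀ n p) : Tensor A N P₀ ⧸ R) =
        QuotientAddGroup.mk (Tensor.mk A N P₀ n p') := fun n _ _ h =>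
    QuotientAddGroup.eq_iff_sub_mem.mpr (mk_sub_mk_mem_range_map hd hdg n h)
  let h : Tensor A N F →+ Tensor A N P₀ ⧸ R :=
    lift (fun n f => QuotientAddGroup.mk (Tensor.mk A N P₀ n (s f)))
      (fun n₁ n₂ f => by rw [mk_add_left, QuotientAddGroup.mk_add])
      (fun n f₁ f₂ => by
        rw [← QuotientAddGroup.mk_add, ← mk_add_right]
        refine hmk n ?_
        rw [hs, map_add, hs, hs])
      (fun a n f => by
        rw [mk_op_smul]
        refine hmk n ?_
        rw [hg, hs, hs])
  refine ⟨h, DFunLike.congr_fun <| addMonoidHom_ext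
    (φ := h.comp (Tensor.map (AddMonoidHom.id N) g (fun _ _ => rfl) hg))
    (ψ := QuotientAddGroup.mk' R) fun n p => ?_⟩
  simp only [h, AddMonoidHom.comp_apply, Tensor.map_mk, lift_mk, QuotientAddGroup.mk'_apply]
  exact hmk n (hs (g p))

theorem exact_map_id (hdg : Function.Exact d g) (hgs : Function.Surjective g) :
    Function.Exact (Tensor.map (AddMonoidHom.id N) d (fun _ _ => rfl) hd)
      (Tensor.map (AddMonoidHom.id N) g (fun _ _ => rfl) hg) := by
  refine AddMonoidHom.exact_of_comp_eq_zero_of_ker_le_range ?_ fun x hx => ?_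
  · refine addMonoidHom_ext fun n q => ?_
    rw [AddMonoidHom.comp_apply, Tensor.map_mk, Tensor.map_mk, AddMonoidHom.id_apply,
      hdg.apply_apply_eq_zero, ← mkRight_apply, map_zero, AddMonoidHom.zero_apply]
  · obtain ⟨h, hh⟩ := exists_comp_map_id_eq_mk hd hg hdg hgs (N := N)
    rw [← QuotientAddGroup.eq_zero_iff, ← hh, AddMonoidHom.mem_ker.mp hx, map_zero]

end RightExact

section FinFree

variable {A : Type u} [NonUnitalRing A] {k : ℕ} {u : Fin k → A}
variable (N : Type w) [AddCommGroup N] [PreMod Aᵐᵒᵖ N]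

noncomputable def evalFinFree : Tensor A N (FinFree A u) →+ (Fin k → N) :=
  lift (fun n p j => op (p j : A) • n)
    (fun n₁ n₂ p => funext fun j => smul_add' _ n₁ n₂)
    (fun n p p' => funext fun j => by
      change op ((p j : A) + p' j) • n = _
      rw [op_add, add_smul']
      rfl)
    (fun a n p => funext fun j => by
      change op (p j : A) • op a • n = op (a * p j) • n
      rw [op_mul, mul_smul'])

@[simp] theorem evalFinFree_mk (n : N) (p : FinFree A u) :
    evalFinFree N (Tensor.mk A N _ n p) = fun j => op (p j : A) • n :=
  lift_mk ..

theorem op_smul_evalFinFree (z : Tensor A N (FinFree A u)) (j : Fin k) :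
    op (u j) • evalFinFree N z j = evalFinFree N z j := by
  refine DFunLike.congr_fun (addMonoidHom_ext
    (φ := (smulHom N (op (u j))).comp ((Pi.evalAddMonoidHom _ j).comp (evalFinFree N)))
    (ψ := (Pi.evalAddMonoidHom _ j).comp (evalFinFree N)) fun n p => ?_) z
  simp only [AddMonoidHom.comp_apply, Pi.evalAddMonoidHom_apply, evalFinFree_mk, smulHom_apply]
  rw [← mul_smul', ← op_mul, (p j).2]

noncomputable def sumFinFree (hu : ∀ j, u j * u j = u j) :
    (Fin k → N) →+ Tensor A N (FinFree A u) :=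
  AddMonoidHom.mk' (fun x => ∑ j, Tensor.mk A N _ (x j) (FinFree.single hu j)) fun x y => by
    rw [← Finset.sum_add_distrib]
    exact Finset.sum_congr rfl fun j _ => mk_add_left _ _ _

theorem sumFinFree_evalFinFree (hu : ∀ j, u j * u j = u j) (z : Tensor A N (FinFree A u)) :
    sumFinFree N hu (evalFinFree N z) = z := by
  refine DFunLike.congr_fun (addMonoidHom_ext (φ := (sumFinFree N hu).comp (evalFinFree N))
    (ψ := AddMonoidHom.id _) fun n p => ?_) z
  simp only [AddMonoidHom.comp_apply, evalFinFree_mk, AddMonoidHom.id_apply]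
  calc ∑ j, Tensor.mk A N _ (op (p j : A) • n) (FinFree.single hu j)
      = ∑ j, mkRight n ((p j : A) • FinFree.single hu j) :=
        Finset.sum_congr rfl fun j _ => mk_op_smul ..
    _ = Tensor.mk A N _ n p := by rw [← map_sum, FinFree.sum_smul_single, mkRight_apply]

end FinFree

end Tensor

section Comparison

variable (A : Type u) [NonUnitalRing A] {I : Type v} (e : I → A) [EnoughIdems A e]
variable (S : Type w) (N : S → Type u) [∀ α, AddCommGroup (N α)] [∀ α, PreMod Aᵐᵒᵖ (N α)]

noncomputable def piTensorComparison (M : Type u) [AddCommGroup M] [PreMod A M] :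
    Tensor A ↥(RA Aᵐᵒᵖ (fun i => op (e i)) (∀ β, N β)) M →+ ∀ α, Tensor A (N α) M :=
  AddMonoidHom.pi (projTensor A e S N M)

variable {A e S N}

theorem piTensorComparison_comp_map_id {M M' : Type u} [AddCommGroup M] [PreMod A M]
    [AddCommGroup M'] [PreMod A M'] {g : M →+ M'} (hg : ∀ (a : A) (m : M), g (a • m) = a • g m) :
    (AddMonoidHom.piMap fun α => Tensor.map (AddMonoidHom.id (N α)) g (fun _ _ => rfl) hg).comp
        (piTensorComparison A e S N M) =
      (piTensorComparison A e S N M').comp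
        (Tensor.map (AddMonoidHom.id _) g (fun _ _ => rfl) hg) := by
  ext z α
  exact (DFunLike.congr_fun (Tensor.map_comp_map_id _ g (fun _ _ => rfl) hg) z).symm

theorem projTensor_mk {M : Type u} [AddCommGroup M] [PreMod A M] (α : S)
    (n : ↥(RA Aᵐᵒᵖ (fun i => op (e i)) (∀ β, N β))) (m : M) :
    projTensor A e S N M α (Tensor.mk A _ M n m) = Tensor.mk A (N α) M (n.1 α) m :=
  Tensor.map_mk ..

variable {k : ℕ} {ι : Fin k → I}

theorem evalFinFree_projTensor (α : S)
    (z : Tensor A ↥(RA Aᵐᵒᵖ (fun i => op (e i)) (∀ β, N β)) (FinFree A fun j => e (ι j)))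
    (j : Fin k) :
    Tensor.evalFinFree (N α) (projTensor A e S N _ α z) j =
      (Tensor.evalFinFree _ z j).1 α := by
  refine DFunLike.congr_fun (Tensor.addMonoidHom_ext
    (φ := (Pi.evalAddMonoidHom _ j).comp
      ((Tensor.evalFinFree (N α)).comp (projTensor A e S N _ α)))
    (ψ := (Pi.evalAddMonoidHom N α).comp ((RA _ _ _).subtype.comp
      ((Pi.evalAddMonoidHom _ j).comp (Tensor.evalFinFree _)))) fun n p => ?_) z
  simp only [AddMonoidHom.comp_apply, projTensor_mk, Tensor.evalFinFree_mk]
  rfl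

theorem projTensor_sumFinFree (hu : ∀ j, e (ι j) * e (ι j) = e (ι j)) (α : S)
    (x : Fin k → ↥(RA Aᵐᵒᵖ (fun i => op (e i)) (∀ β, N β))) :
    projTensor A e S N _ α (Tensor.sumFinFree _ hu x) =
      Tensor.sumFinFree (N α) hu fun j => (x j).1 α := by
  simp only [Tensor.sumFinFree, AddMonoidHom.mk'_apply, map_sum, projTensor_mk]

theorem piTensorComparison_finFree_bijective :
    Function.Bijective (piTensorComparison A e S N (FinFree A fun j => e (ι j))) := by
  have hu : ∀ j, e (ι j) * e (ι j) = e (ι j) := fun j => EnoughIdems.idem (ι j)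
  constructor
  · intro z₁ z₂ h
    have heval : Tensor.evalFinFree _ z₁ = Tensor.evalFinFree _ z₂ :=
      funext fun j => Subtype.ext <| funext fun α => by
        rw [← evalFinFree_projTensor, ← evalFinFree_projTensor]
        exact congrArg (Tensor.evalFinFree (N α) · j) (congrFun h α)
    rw [← Tensor.sumFinFree_evalFinFree _ hu z₁, heval, Tensor.sumFinFree_evalFinFree]
  · intro w
    -- `(n_α)_α` with every `n_α ∈ N_α·eᵢ` is fixed by `eᵢ`, hence lies in `R_A(∏ N_α)`
    let x : Fin k → ↥(RA Aᵐᵒᵖ (fun i => op (e i)) (∀ β, N β)) := fun j =>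
      ⟨fun α => Tensor.evalFinFree (N α) (w α) j, AddSubgroup.subset_closure
        ⟨ι j, _, funext fun α => (Tensor.op_smul_evalFinFree _ (w α) j).symm⟩⟩
    refine ⟨Tensor.sumFinFree _ hu x, funext fun α => ?_⟩
    exact (projTensor_sumFinFree hu α x).trans (Tensor.sumFinFree_evalFinFree _ hu (w α))

end Comparison

end EIMod

theorem unital_product_tensor_finitely_presented_bijective_general
    (A : Type u) [NonUnitalRing A] {I : Type v} (e : I → A) [EnoughIdems A e]
    (S : Type w) (N : S → Type u) [∀ α, AddCommGroup (N α)] [∀ α, PreMod Aᵐᵒᵖ (N α)]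
    (F : Type u) [AddCommGroup F] [PreMod A F] (hF : IsFPn A e 1 F) :
    Function.Bijective
      (fun z : Tensor A (↥(RA Aᵐᵒᵖ (fun i => op (e i)) (∀ β, N β))) F =>
        fun α : S => projTensor A e S N F α z) := by
  obtain ⟨k, ι, d, g, hgs, hker, -⟩ := hF
  have hexact : Function.Exact (d 0).1 g.1 := AddMonoidHom.exact_iff.mpr (hker one_pos).symm
  exact AddMonoidHom.bijective_of_surjective_of_bijective_of_right_exact _ _ _ _ _ _
    (piTensorComparison A e S N F)
    (piTensorComparison_comp_map_id (d 0).2) (piTensorComparison_comp_map_id g.2)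
    (Tensor.exact_map_id (d 0).2 g.2 hexact hgs)
    (Function.Exact.piMap fun _ => Tensor.exact_map_id (d 0).2 g.2 hexact hgs)
    piTensorComparison_finFree_bijective.2 piTensorComparison_finFree_bijective
    (Tensor.map_surjective (fun _ _ => rfl) g.2 Function.surjective_id hgs)
    (Function.Surjective.piMap fun _ =>
      Tensor.map_surjective (fun _ _ => rfl) g.2 Function.surjective_id hgs)

/-- For a ring `A` with enough idempotents, a family `{N_α}` of unital right
`A`-modules and a finitely presented unital left `A`-module `F`, the natural map
`R_A(∏_α N_α) ⊗_A F → ∏_α (N_α ⊗_A F)` is an isomorphism, where `R_A(∏_α N_α)` is the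
product in the category of unital right `A`-modules. -/
theorem unital_product_tensor_finitely_presented_bijective
    (A : Type u) [NonUnitalRing A] {I : Type v} (e : I → A) [EnoughIdems A e]
    (S : Type w) (N : S → Type u) [∀ α, AddCommGroup (N α)] [∀ α, PreMod Aᵐᵒᵖ (N α)]
    (hN : ∀ α, IsUnital Aᵐᵒᵖ (fun i => op (e i)) (N α))
    (F : Type u) [AddCommGroup F] [PreMod A F] (hF : IsFPn A e 1 F) :
    Function.Bijective
      (fun z : Tensor A (↥(RA Aᵐᵒᵖ (fun i => op (e i)) (∀ β, N β))) F =>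
        fun α : S => projTensor A e S N F α z) :=
  unital_product_tensor_finitely_presented_bijective_general A e S N F hF
end

section
/- The category Ch(R) of chain complexes of left R-modules over a nonzero ring R with identity is never n-hereditary for any n ≥ 0: the sphere complex S⁰(R) (R concentrated in degree 0) is of type FP_n in Ch(R) for every n but has infinite projective dimension in Ch(R). -/
open CategoryTheory Limits

universe u

/-- A left `R`-module is of type `FPₙ` (finitely `n`-presented): it admits an exact sequence
`Pₙ → ⋯ → P₁ → P₀ → M → 0` with each `Pₖ` finitely generated free. -/
def ModIsFPn (R : Type u) [Ring R] (n : ℕ) (M : Type u) [AddCommGroup M] [Module R M] :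
    Prop :=
  ∃ (k : ℕ → ℕ) (d : ∀ s : ℕ, (Fin (k (s + 1)) → R) →ₗ[R] (Fin (k s) → R))
    (g : (Fin (k 0) → R) →ₗ[R] M),
    Function.Surjective g ∧
    (0 < n → LinearMap.range (d 0) = LinearMap.ker g) ∧
    (∀ s : ℕ, s + 1 < n → LinearMap.range (d (s + 1)) = LinearMap.ker (d s))

/-- A left `R`-module has projective dimension at most `1`: the kernel of a free cover is
projective. -/
def ModPdLeOne (R : Type u) [Ring R] (M : Type u) [AddCommGroup M] [Module R M] : Prop :=
  ∃ (ι : Type u) (g : (ι →₀ R) →ₗ[R] M), Function.Surjective g ∧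
    Module.Projective R (LinearMap.ker g)

/-- The category of (ℤ-indexed) chain complexes of left `R`-modules. -/
abbrev ChainCpx (R : Type u) [Ring R] :=
  HomologicalComplex (ModuleCat.{u} R) (ComplexShape.down ℤ)

/-- A chain complex is of type `FPₙ` in `Ch(R)` iff it is bounded and all of its entries are
left `R`-modules of type `FPₙ` (finitely `n`-presented). -/
def ChIsFPn (R : Type u) [Ring R] (n : ℕ) (X : ChainCpx R) : Prop :=
  (∃ a b : ℤ, ∀ i : ℤ, (i < a ∨ b < i) → IsZero (X.X i)) ∧
  ∀ i : ℤ, ModIsFPn R n (X.X i)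

/-- Projective dimension at most `m` of an object of an abelian category, via iterated
syzygies by projective covers. -/
def CatPdLe {C : Type*} [Category C] [Abelian C] : ℕ → C → Prop
  | 0, X => Projective X
  | (m + 1), X => ∃ (K P : C) (i : K ⟶ P) (p : P ⟶ X) (w : i ≫ p = 0),
      Projective P ∧ (ShortComplex.mk i p w).ShortExact ∧ CatPdLe m K

/-- The sphere complex `S⁰(R)`: `R` concentrated in degree `0`. -/
noncomputable def sphereCpx (R : Type u) [Ring R] : ChainCpx R :=
  (HomologicalComplex.single (ModuleCat.{u} R) (ComplexShape.down ℤ) 0).obj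
    (ModuleCat.of R R)

/-
Every projective complex `P` is a retract of the disk complex `⨁ₙ Dⁿ(Pₙ)`, which is contractible,
so projective complexes are acyclic. If `0 → K → P → X → 0` is short exact with `K` and `P`
acyclic, then so is `X`; by induction every complex of finite projective dimension is acyclic.
But `H₀(S⁰(R)) = R ≠ 0`, while every entry of `S⁰(R)` is `R` or `0`, hence finitely
`n`-presented for every `n`.
-/

namespace CategoryTheory.ShortComplex.ShortExact

variable {C ι : Type*} [Category C] [Abelian C] {c : ComplexShape ι}

lemma acyclic_X₃_of_acyclic {S : ShortComplex (HomologicalComplex C c)} (hS : S.ShortExact)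
    (h₁ : S.X₁.Acyclic) (h₂ : S.X₂.Acyclic) : S.X₃.Acyclic := fun i =>
  hS.exactAt_X₃ i ((h₂ i).isZero_homology.epi _) fun j _ => (h₁ j).isZero_homology.mono _

end CategoryTheory.ShortComplex.ShortExact

namespace HomologicalComplex

variable {C ι : Type*} [Category C] [Abelian C] {c : ComplexShape ι}

lemma Acyclic.of_epi_of_projective {E P : HomologicalComplex C c} (hE : E.Acyclic) (π : E ⟶ P)
    [Epi π] [Projective P] : P.Acyclic := by
  intro i
  rw [exactAt_iff_isZero_homology, IsZero.iff_id_eq_zero, ← homologyMap_id,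
    ← Projective.factorThru_comp (𝟙 P) π, homologyMap_comp,
    (hE i).isZero_homology.eq_of_tgt (homologyMap _ i) 0, zero_comp]

lemma acyclic_of_catPdLe (hproj : ∀ P : HomologicalComplex C c, Projective P → P.Acyclic) :
    ∀ (m : ℕ) (X : HomologicalComplex C c), CatPdLe m X → X.Acyclic
  | 0, X, hX => hproj X hX
  | m + 1, _, ⟨K, P, _, _, _, hP, hS, hK⟩ =>
      hS.acyclic_X₃_of_acyclic (acyclic_of_catPdLe hproj m K hK) (hproj P hP)

end HomologicalComplex

namespace ChainComplex

variable {R : Type u} [Ring R]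

/-- The disk complex `⨁ₙ Dⁿ(Pₙ)`, with differential `(a, b) ↦ (0, a)`. -/
noncomputable def disk (P : ChainCpx R) : ChainCpx R :=
  ChainComplex.of (fun i => ModuleCat.of R (P.X i × P.X (i + 1)))
    (fun i => ModuleCat.ofHom ((LinearMap.inr R _ _).comp (LinearMap.fst R _ _)))
    (fun _ => by ext <;> rfl)

lemma disk_d (P : ChainCpx R) (k : ℤ) :
    (disk P).d (k + 1) k = ModuleCat.ofHom ((LinearMap.inr R _ _).comp (LinearMap.fst R _ _)) := by
  simp [disk]

noncomputable def diskπ (P : ChainCpx R) : disk P ⟶ P :=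
  ChainComplex.ofHom
    (fun i => ModuleCat.ofHom (LinearMap.coprod LinearMap.id (P.d (i + 1) i).hom))
    (fun i => by
      ext ⟨a, b⟩
      have hdd := congr($(P.d_comp_d (i + 1 + 1) (i + 1) i).hom b)
      simp only [ModuleCat.hom_comp, LinearMap.comp_apply, ModuleCat.hom_zero,
        LinearMap.zero_apply] at hdd
      rw [disk_d]
      change (P.d (i + 1) i).hom (a + (P.d _ _).hom b) = 0 + (P.d (i + 1) i).hom a
      rw [map_add, hdd, add_zero, zero_add])

lemma disk_acyclic (P : ChainCpx R) : (disk P).Acyclic := by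
  intro j
  obtain ⟨k, rfl⟩ : ∃ k, j = k + 1 := ⟨j - 1, by omega⟩
  rw [HomologicalComplex.exactAt_iff' _ (k + 1 + 1) (k + 1) k (by simp) (by simp),
    ShortComplex.moduleCat_exact_iff]
  rintro ⟨a, b⟩ (hab : ((disk P).d (k + 1) k).hom (a, b) = 0)
  rw [disk_d] at hab
  obtain rfl : a = 0 := congr_arg Prod.snd hab
  refine ⟨(b, 0), ?_⟩
  change ((disk P).d (k + 1 + 1) (k + 1)).hom (b, 0) = (0, b)
  rw [disk_d]
  rfl

instance epi_diskπ (P : ChainCpx R) : Epi (diskπ P) := by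
  refine HomologicalComplex.epi_of_epi_f _ fun i => ?_
  rw [ModuleCat.epi_iff_surjective]
  intro x
  exact ⟨(x, 0), show x + (P.d (i + 1) i).hom 0 = x by simp⟩

lemma acyclic_of_projective (P : ChainCpx R) [Projective P] : P.Acyclic :=
  (disk_acyclic P).of_epi_of_projective (diskπ P)

end ChainComplex

lemma modIsFPn_of_linearEquiv {R : Type u} [Ring R] (n k : ℕ) {M : Type u} [AddCommGroup M]
    [Module R M] (e : (Fin k → R) ≃ₗ[R] M) : ModIsFPn R n M := by
  refine ⟨fun | 0 => k | _ + 1 => 0, fun _ => 0, e.toLinearMap, e.surjective,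
    fun _ => by rw [LinearMap.range_zero, LinearEquiv.ker], fun _ _ => Subsingleton.elim _ _⟩

section sphereCpx

variable {R : Type u} [Ring R]

lemma sphereCpx_isFPn (n : ℕ) : ChIsFPn R n (sphereCpx R) := by
  refine ⟨⟨0, 0, fun i hi => HomologicalComplex.isZero_single_obj_X _ _ _ i (by omega)⟩,
    fun i => ?_⟩
  by_cases hi : i = 0
  · subst hi
    exact modIsFPn_of_linearEquiv n 1 ((LinearEquiv.funUnique (Fin 1) R R).trans
      (HomologicalComplex.singleObjXSelf _ 0 (ModuleCat.of R R)).toLinearEquiv.symm)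
  · exact modIsFPn_of_linearEquiv n 0 ((HomologicalComplex.isZero_single_obj_X _ _ _ i hi).iso
      (ModuleCat.isZero_of_subsingleton (ModuleCat.of R (Fin 0 → R)))).toLinearEquiv.symm

lemma not_acyclic_sphereCpx [Nontrivial R] : ¬ (sphereCpx R).Acyclic := fun h => by
  have hR : IsZero (ModuleCat.of R R) := ((h 0).isZero_homology).of_iso
    (HomologicalComplex.singleObjHomologySelfIso (ComplexShape.down ℤ) 0 (ModuleCat.of R R)).symm
  exact not_subsingleton R (ModuleCat.isZero_of_iff_subsingleton.mp hR)

end sphereCpx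

/-- For a nonzero ring `R`, the category `Ch(R)` is never `n`-hereditary:
the sphere complex `S⁰(R)` is of type `FPₙ` in `Ch(R)` for every `n`, yet it has infinite
projective dimension; in particular, for no `n` does every object of type `FPₙ` in `Ch(R)`
have projective dimension at most `1`. -/
theorem chain_complexes_never_n_hereditary (R : Type u) [Ring R] [Nontrivial R] :
    (∀ n : ℕ, ChIsFPn R n (sphereCpx R)) ∧
    (∀ m : ℕ, ¬ CatPdLe m (sphereCpx R)) ∧
    (∀ n : ℕ, ¬ ∀ X : ChainCpx R, ChIsFPn R n X → CatPdLe 1 X) := by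
  have infinite_pd (m : ℕ) : ¬ CatPdLe m (sphereCpx R) := fun h =>
    not_acyclic_sphereCpx (HomologicalComplex.acyclic_of_catPdLe
      (fun P _ => ChainComplex.acyclic_of_projective P) m _ h)
  exact ⟨sphereCpx_isFPn, infinite_pd, fun n h => infinite_pd 1 (h _ (sphereCpx_isFPn n))⟩
end

section
/- Let A be a small additive category and n ≥ 1. The functor category Add(A, Ab) is n-coherent (every object of type FP_n is of type FP_{n+1}) if and only if every morphism in A that has a pseudo (n−1)-cokernel has a pseudo n-cokernel. -/
open CategoryTheory Limits Opposite

universe u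

variable (𝒜 : Type u) [SmallCategory 𝒜] [Preadditive 𝒜] [HasFiniteBiproducts 𝒜]

/-- A morphism `f : Y ⟶ X` of `𝒜` has a pseudo `m`-cokernel: a chain
`X ⟶ W₀ ⟶ W₁ ⟶ ⋯` such that applying `Hom(-, Z)` yields an exact sequence
`Hom(W_{m-1}, Z) → ⋯ → Hom(W₀, Z) → Hom(X, Z) → Hom(Y, Z)` for every `Z`.
(Every morphism is a pseudo `0`-cokernel of itself.) -/
def HasPseudoCoker (m : ℕ) {Y X : 𝒜} (f : Y ⟶ X) : Prop :=
  m = 0 ∨ ∃ (W : ℕ → 𝒜) (d₀ : X ⟶ W 0) (d : ∀ i : ℕ, W i ⟶ W (i + 1)),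
    (∀ (Z : 𝒜) (u : X ⟶ Z), f ≫ u = 0 ↔ ∃ v : W 0 ⟶ Z, u = d₀ ≫ v) ∧
    (2 ≤ m → ∀ (Z : 𝒜) (u : W 0 ⟶ Z), d₀ ≫ u = 0 ↔ ∃ v : W 1 ⟶ Z, u = d 0 ≫ v) ∧
    (∀ i : ℕ, i + 3 ≤ m → ∀ (Z : 𝒜) (u : W (i + 1) ⟶ Z),
      d i ≫ u = 0 ↔ ∃ v : W (i + 2) ⟶ Z, u = d (i + 1) ≫ v)

/-- An additive functor `F : 𝒜 ⥤ Ab` is of type `FPₙ` if it admits an exact resolution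
`Hom(Xₙ, -) → ⋯ → Hom(X₀, -) → F → 0` by representable functors (exactness is tested
pointwise). -/
def FunctorIsFPn (n : ℕ) (F : 𝒜 ⥤ AddCommGrpCat.{u}) : Prop :=
  ∃ (X : ℕ → 𝒜) (g : ∀ s : ℕ, X s ⟶ X (s + 1))
    (ε : preadditiveCoyoneda.obj (op (X 0)) ⟶ F),
    (∀ Z : 𝒜, Function.Surjective (ε.app Z)) ∧
    (0 < n → ∀ (Z : 𝒜) (u : X 0 ⟶ Z), ε.app Z u = 0 ↔ ∃ v : X 1 ⟶ Z, u = g 0 ≫ v) ∧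
    (∀ s : ℕ, s + 1 < n → ∀ (Z : 𝒜) (u : X (s + 1) ⟶ Z),
      g s ≫ u = 0 ↔ ∃ v : X (s + 2) ⟶ Z, u = g (s + 1) ≫ v)

/-!
An additive functor is `FP_{n+1}` exactly when it is the cokernel of `Hom(g, -)` for a morphism `g`
having a pseudo `n`-cokernel; this gives one direction at once. Conversely, for `f` with a pseudo
`(n-1)`-cokernel, the cokernel of `Hom(f, -)` is `FP_n`, hence `FP_{n+1}`, so it has a second
presentation `g` with a pseudo `n`-cokernel. Lifting the two presentations against each other
level by level gives chain maps `p`, `q` together with a homotopy `k` from `p ≫ q` to the identity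
that is valid up to the current level. At the last level `a`, where only `b` still has a weak
cokernel `b'`, the map `(𝟙 - p ≫ q - k ≫ a, p ≫ b')` into a biproduct is a weak cokernel of `a`.
-/

universe v w

section

variable {C : Type w} [Category.{v} C] [Preadditive C]

def IsWeakCokernel {A B B' : C} (a : A ⟶ B) (b : B ⟶ B') : Prop :=
  ∀ (Z : C) (u : B ⟶ Z), a ≫ u = 0 ↔ ∃ v : B' ⟶ Z, u = b ≫ v

lemma IsWeakCokernel.comp_eq_zero {A B B' : C} {a : A ⟶ B} {b : B ⟶ B'}
    (h : IsWeakCokernel a b) : a ≫ b = 0 :=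
  (h _ b).2 ⟨𝟙 _, (Category.comp_id b).symm⟩

structure IsPresentation {F : C ⥤ AddCommGrpCat.{v}} {X₀ X₁ : C}
    (ε : preadditiveCoyoneda.obj (op X₀) ⟶ F) (g : X₀ ⟶ X₁) : Prop where
  surjective (Z : C) : Function.Surjective (ε.app Z)
  app_eq_zero_iff (Z : C) (u : X₀ ⟶ Z) : ε.app Z u = 0 ↔ ∃ v : X₁ ⟶ Z, u = g ≫ v

lemma IsPresentation.app_eq_zero {F : C ⥤ AddCommGrpCat.{v}} {X₀ X₁ : C}
    {ε : preadditiveCoyoneda.obj (op X₀) ⟶ F} {g : X₀ ⟶ X₁} (h : IsPresentation ε g) :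
    ε.app X₁ g = 0 :=
  (h.app_eq_zero_iff _ g).2 ⟨𝟙 _, (Category.comp_id g).symm⟩

lemma exists_lift_of_surjective {F : C ⥤ AddCommGrpCat.{v}} {X₀ B₀ : C}
    (ε : preadditiveCoyoneda.obj (op X₀) ⟶ F) {ε' : preadditiveCoyoneda.obj (op B₀) ⟶ F}
    (hε' : ∀ Z, Function.Surjective (ε'.app Z)) :
    ∃ q : B₀ ⟶ X₀, ∀ (Z : C) (u : X₀ ⟶ Z), ε.app Z u = ε'.app Z (q ≫ u) := by
  obtain ⟨q, hq⟩ := hε' X₀ (ε.app X₀ (𝟙 X₀))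
  refine ⟨q, fun Z u => ?_⟩
  calc ε.app Z u = ε.app Z (𝟙 X₀ ≫ u) := by rw [Category.id_comp]
    _ = F.map u (ε.app X₀ (𝟙 X₀)) := NatTrans.naturality_apply ε u (𝟙 X₀)
    _ = ε'.app Z (q ≫ u) := by rw [← hq]; exact (NatTrans.naturality_apply ε' u q).symm

/-- The level-`A'` components of chain maps `q : B• → A•`, `p : A• → B•` and of a homotopy `k`,
where `𝟙 - p' ≫ q' - k ≫ a` need not vanish but is killed by `a`. -/
structure Comparison {A A' B B' : C} (a : A ⟶ A') (b : B ⟶ B') where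
  q : B ⟶ A
  q' : B' ⟶ A'
  p : A ⟶ B
  p' : A' ⟶ B'
  k : A' ⟶ A
  comm_q : b ≫ q' = q ≫ a
  comm_p : a ≫ p' = p ≫ b
  homotopy : a ≫ (𝟙 A' - p' ≫ q' - k ≫ a) = 0

namespace Comparison

lemma nonempty_of_isPresentation {F : C ⥤ AddCommGrpCat.{v}} {X₀ X₁ B₀ B₁ : C}
    {ε : preadditiveCoyoneda.obj (op X₀) ⟶ F} {ε' : preadditiveCoyoneda.obj (op B₀) ⟶ F}
    {f : X₀ ⟶ X₁} {g : B₀ ⟶ B₁} (hf : IsPresentation ε f) (hg : IsPresentation ε' g) :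
    Nonempty (Comparison f g) := by
  obtain ⟨q, hq⟩ := exists_lift_of_surjective ε hg.surjective
  obtain ⟨p, hp⟩ := exists_lift_of_surjective ε' hf.surjective
  obtain ⟨q', hq'⟩ := (hg.app_eq_zero_iff _ (q ≫ f)).1 (by rw [← hq]; exact hf.app_eq_zero)
  obtain ⟨p', hp'⟩ := (hf.app_eq_zero_iff _ (p ≫ g)).1 (by rw [← hp]; exact hg.app_eq_zero)
  obtain ⟨k, hk⟩ := (hf.app_eq_zero_iff _ (𝟙 X₀ - p ≫ q)).1 (by
    rw [show ε.app X₀ (𝟙 X₀ - p ≫ q) = ε.app X₀ (𝟙 X₀) - ε.app X₀ (p ≫ q) from map_sub _ _ _,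
      ← hp, hq, Category.comp_id, sub_self])
  refine ⟨⟨q, q', p, p', k, hq'.symm, hp'.symm, ?_⟩⟩
  have e₁ : f ≫ p' ≫ q' = p ≫ q ≫ f := by
    rw [← Category.assoc, ← hp', Category.assoc, ← hq']
  have e₂ : f ≫ k ≫ f = f - p ≫ q ≫ f := by
    rw [← Category.assoc, ← hk, Preadditive.sub_comp, Category.id_comp, Category.assoc]
  simp only [Preadditive.comp_sub, Category.comp_id, e₁, e₂, sub_self]

variable {A A' A'' B B' B'' : C} {a : A ⟶ A'} {b : B ⟶ B'}

lemma nonempty_next (c : Comparison a b) {a' : A' ⟶ A''} {b' : B' ⟶ B''}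
    (ha : IsWeakCokernel a a') (hb : IsWeakCokernel b b') : Nonempty (Comparison a' b') := by
  obtain ⟨q'', hq''⟩ := (hb _ (c.q' ≫ a')).1 (by
    rw [← Category.assoc, c.comm_q, Category.assoc, ha.comp_eq_zero, Limits.comp_zero])
  obtain ⟨p'', hp''⟩ := (ha _ (c.p' ≫ b')).1 (by
    rw [← Category.assoc, c.comm_p, Category.assoc, hb.comp_eq_zero, Limits.comp_zero])
  obtain ⟨k', hk'⟩ := (ha _ _).1 c.homotopy
  refine ⟨⟨c.q', q'', c.p', p'', k', hq''.symm, hp''.symm, ?_⟩⟩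
  have e₁ : a' ≫ p'' ≫ q'' = c.p' ≫ c.q' ≫ a' := by
    rw [← Category.assoc, ← hp'', Category.assoc, ← hq'']
  have e₂ : a' ≫ k' ≫ a' = a' - c.p' ≫ c.q' ≫ a' := by
    rw [← Category.assoc, ← hk']
    simp only [Preadditive.sub_comp, Category.id_comp, Category.assoc, ha.comp_eq_zero,
      Limits.comp_zero, sub_zero]
  simp only [Preadditive.comp_sub, Category.comp_id, e₁, e₂, sub_self]

lemma isWeakCokernel_biprodLift [HasBinaryBiproducts C] (c : Comparison a b) {b' : B' ⟶ B''}
    (hb : IsWeakCokernel b b') :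
    IsWeakCokernel a (biprod.lift (𝟙 A' - c.p' ≫ c.q' - c.k ≫ a) (c.p' ≫ b')) := by
  intro Z u
  constructor
  · intro hu
    obtain ⟨w, hw⟩ := (hb _ (c.q' ≫ u)).1 (by
      rw [← Category.assoc, c.comm_q, Category.assoc, hu, Limits.comp_zero])
    refine ⟨biprod.desc u w, ?_⟩
    rw [biprod.lift_desc, Category.assoc, ← hw]
    simp only [Preadditive.sub_comp, Category.id_comp, Category.assoc, hu, Limits.comp_zero,
      sub_zero, sub_add_cancel]
  · rintro ⟨v, rfl⟩
    have h : a ≫ biprod.lift (𝟙 A' - c.p' ≫ c.q' - c.k ≫ a) (c.p' ≫ b') = 0 := by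
      ext
      · simpa using c.homotopy
      · simp [reassoc_of% c.comm_p, hb.comp_eq_zero]
    rw [← Category.assoc, h, Limits.zero_comp]

end Comparison

section CoyonedaCokernel

variable {Y X : C} (f : Y ⟶ X)

noncomputable def coyonedaCokernel : C ⥤ AddCommGrpCat.{v} where
  obj Z := AddCommGrpCat.of ((Y ⟶ Z) ⧸ (Preadditive.leftComp Z f).range)
  map {Z Z'} g := AddCommGrpCat.ofHom (QuotientAddGroup.map _ _ (Preadditive.rightComp Y g) (by
    rintro _ ⟨v, rfl⟩
    exact ⟨v ≫ g, by simp [Preadditive.leftComp, Preadditive.rightComp]⟩))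
  map_id Z := by
    ext
    simp [Preadditive.rightComp]
  map_comp g g' := by
    ext
    simp [Preadditive.rightComp]

instance : (coyonedaCokernel f).Additive where
  map_add {Z Z' g g'} := by
    ext x
    induction x using QuotientAddGroup.induction_on with | H u => ?_
    change ((u ≫ (g + g') : Y ⟶ Z') : (Y ⟶ Z') ⧸ (Preadditive.leftComp Z' f).range) =
      ((u ≫ g : Y ⟶ Z') : (Y ⟶ Z') ⧸ _) + ((u ≫ g' : Y ⟶ Z') : (Y ⟶ Z') ⧸ _)
    rw [Preadditive.comp_add, QuotientAddGroup.mk_add]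

noncomputable def coyonedaCokernel.π : preadditiveCoyoneda.obj (op Y) ⟶ coyonedaCokernel f where
  app Z := AddCommGrpCat.ofHom
    (QuotientAddGroup.mk' (Preadditive.leftComp Z f).range : (Y ⟶ Z) →+ _)

lemma coyonedaCokernel.isPresentation_π : IsPresentation (coyonedaCokernel.π f) f where
  surjective Z := QuotientAddGroup.mk_surjective
  app_eq_zero_iff Z u := by
    change (u : (Y ⟶ Z) ⧸ (Preadditive.leftComp Z f).range) = 0 ↔ _
    rw [QuotientAddGroup.eq_zero_iff, AddMonoidHom.mem_range]
    exact exists_congr fun v => eq_comm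

end CoyonedaCokernel

end

section SmallCategory

variable {𝒞 : Type u} [SmallCategory 𝒞] [Preadditive 𝒞]

lemma hasPseudoCoker_succ_iff (m : ℕ) {Y X : 𝒞} (f : Y ⟶ X) :
    HasPseudoCoker 𝒞 (m + 1) f ↔
      ∃ (X' : 𝒞) (d : X ⟶ X'), IsWeakCokernel f d ∧ HasPseudoCoker 𝒞 m d := by
  constructor
  · rintro (h | ⟨W, d₀, d, h₀, h₁, h₂⟩)
    · omega
    refine ⟨W 0, d₀, h₀, ?_⟩
    cases m with
    | zero => exact .inl rfl
    | succ m =>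
      exact .inr ⟨fun i => W (i + 1), d 0, fun i => d (i + 1), h₁ (by omega),
        fun _ => h₂ 0 (by omega), fun i _ => h₂ (i + 1) (by omega)⟩
  · rintro ⟨X', d₀, h₀, rfl | ⟨W, d₀', d, h₁, h₂, h₃⟩⟩
    · exact .inr ⟨fun _ => X', d₀, fun _ => 𝟙 X', h₀, by omega, by omega⟩
    · refine .inr ⟨fun | 0 => X' | i + 1 => W i, d₀, fun | 0 => d₀' | i + 1 => d i, h₀,
        fun _ => h₁, ?_⟩
      rintro (_ | i) hi
      · exact h₂ (by omega)
      · exact h₃ i (by omega)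

lemma functorIsFPn_succ_iff (n : ℕ) (F : 𝒞 ⥤ AddCommGrpCat.{u}) :
    FunctorIsFPn 𝒞 (n + 1) F ↔
      ∃ (X₀ X₁ : 𝒞) (g : X₀ ⟶ X₁) (ε : preadditiveCoyoneda.obj (op X₀) ⟶ F),
        IsPresentation ε g ∧ HasPseudoCoker 𝒞 n g := by
  constructor
  · rintro ⟨X, g, ε, hs, hk, hx⟩
    refine ⟨X 0, X 1, g 0, ε, ⟨hs, hk n.succ_pos⟩, ?_⟩
    cases n with
    | zero => exact .inl rfl
    | succ n =>
      exact .inr ⟨fun i => X (i + 2), g 1, fun i => g (i + 2), hx 0 (by omega),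
        fun _ => hx 1 (by omega), fun i _ => hx (i + 2) (by omega)⟩
  · rintro ⟨X₀, X₁, g, ε, hε, rfl | ⟨W, d₀, d, h₀, h₁, h₂⟩⟩
    · exact ⟨fun | 0 => X₀ | _ + 1 => X₁, fun | 0 => g | _ + 1 => 𝟙 X₁, ε, hε.surjective,
        fun _ => hε.app_eq_zero_iff, by omega⟩
    · refine ⟨fun | 0 => X₀ | 1 => X₁ | i + 2 => W i, fun | 0 => g | 1 => d₀ | i + 2 => d i,
        ε, hε.surjective, fun _ => hε.app_eq_zero_iff, ?_⟩
      rintro (_ | _ | i) hi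
      · exact h₀
      · exact h₁ (by omega)
      · exact h₂ i (by omega)

lemma Comparison.hasPseudoCoker_succ [HasBinaryBiproducts 𝒞] (m : ℕ) {A A' B B' : 𝒞}
    {a : A ⟶ A'} {b : B ⟶ B'} (c : Comparison a b) (ha : HasPseudoCoker 𝒞 m a)
    (hb : HasPseudoCoker 𝒞 (m + 1) b) : HasPseudoCoker 𝒞 (m + 1) a := by
  induction m generalizing A A' B B' with
  | zero =>
    obtain ⟨_, b', hb', -⟩ := (hasPseudoCoker_succ_iff 0 b).1 hb
    exact (hasPseudoCoker_succ_iff 0 a).2 ⟨_, _, c.isWeakCokernel_biprodLift hb', .inl rfl⟩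
  | succ m ih =>
    obtain ⟨_, a', ha', ha'm⟩ := (hasPseudoCoker_succ_iff m a).1 ha
    obtain ⟨_, b', hb', hb'm⟩ := (hasPseudoCoker_succ_iff (m + 1) b).1 hb
    obtain ⟨c'⟩ := c.nonempty_next ha' hb'
    exact (hasPseudoCoker_succ_iff (m + 1) a).2 ⟨_, a', ha', ih c' ha'm hb'm⟩

end SmallCategory

/-- For a small additive category `𝒜` and `n ≥ 1`, the functor category
`Add(𝒜, Ab)` is `n`-coherent (every object of type `FPₙ` is of type `FP_{n+1}`) if and only
if every morphism of `𝒜` having a pseudo `(n-1)`-cokernel has a pseudo `n`-cokernel. -/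
theorem functor_category_n_coherent_iff_pseudo_cokernels (n : ℕ) (hn : 1 ≤ n) :
    (∀ F : 𝒜 ⥤ AddCommGrpCat.{u}, F.Additive →
      FunctorIsFPn 𝒜 n F → FunctorIsFPn 𝒜 (n + 1) F) ↔
    (∀ (Y X : 𝒜) (f : Y ⟶ X),
      HasPseudoCoker 𝒜 (n - 1) f → HasPseudoCoker 𝒜 n f) := by
  obtain ⟨m, rfl⟩ : ∃ m, n = m + 1 := ⟨n - 1, by omega⟩
  rw [Nat.add_sub_cancel]
  constructor
  · intro coherent Y X f hf
    have hπ := coyonedaCokernel.isPresentation_π f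
    obtain ⟨_, _, g, _, hg, hgm⟩ := (functorIsFPn_succ_iff (m + 1) _).1 <|
      coherent _ inferInstance ((functorIsFPn_succ_iff m _).2 ⟨_, _, f, _, hπ, hf⟩)
    obtain ⟨c⟩ := Comparison.nonempty_of_isPresentation hπ hg
    have := hasBinaryBiproducts_of_finite_biproducts 𝒜
    exact c.hasPseudoCoker_succ m hf hgm
  · intro hyp F _ hF
    obtain ⟨_, _, g, ε, hε, hg⟩ := (functorIsFPn_succ_iff m F).1 hF
    exact (functorIsFPn_succ_iff (m + 1) F).2 ⟨_, _, g, ε, hε, hyp _ _ g hg⟩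
end

section
/- Let A be a small additive category. Add(A, Ab) is 1-hereditary (every finitely presented functor has projective dimension ≤ 1) if and only if: (a) every morphism in A has a pseudo-cokernel, and (b) for every morphism f : Y → X with pseudo-cokernel f₁ : X → X₁ there exists an endomorphism α : X → X such that f₁ ∘ α = 0 and α ∘ f = f. -/
open CategoryTheory Limits Opposite

universe u

variable (𝒜 : Type u) [SmallCategory 𝒜] [Preadditive 𝒜] [HasFiniteBiproducts 𝒜]

variable {𝒜}

/-- The image subfunctor `Im(f^*) ⊆ Hom(Y, -)` of the natural transformation
`f^* : Hom(X, -) ⟶ Hom(Y, -)` induced by `f : Y ⟶ X`. -/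
def imSet {Y X : 𝒜} (f : Y ⟶ X) (Z : 𝒜) : AddSubgroup (Y ⟶ Z) where
  carrier := {u | ∃ v : X ⟶ Z, u = f ≫ v}
  zero_mem' := ⟨0, by simp⟩
  add_mem' := by
    rintro u u' ⟨v, rfl⟩ ⟨v', rfl⟩
    exact ⟨v + v', by rw [Preadditive.comp_add]⟩
  neg_mem' := by
    rintro u ⟨v, rfl⟩
    exact ⟨-v, by rw [Preadditive.comp_neg]⟩

/-- The image of `f^* : Hom(X, -) ⟶ Hom(Y, -)` as a functor `𝒜 ⥤ Ab`. -/
def imageFunctor {Y X : 𝒜} (f : Y ⟶ X) : 𝒜 ⥤ AddCommGrpCat.{u} where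
  obj Z := AddCommGrpCat.of ↥(imSet f Z)
  map {Z Z'} h := AddCommGrpCat.ofHom <|
    AddMonoidHom.mk' (fun u => ⟨u.1 ≫ h, by
      obtain ⟨v, hv⟩ := u.2
      exact ⟨v ≫ h, by rw [hv, Category.assoc]⟩⟩)
      (fun u u' => Subtype.ext (Preadditive.add_comp _ _ _ _ _ _))
  map_id Z := by
    ext u
    exact Category.comp_id _
  map_comp {Z Z' Z''} h h' := by
    ext u
    exact (Category.assoc _ _ _).symm

/-- Projectivity of a functor with respect to pointwise-surjective natural transformations
of additive functors (i.e. projectivity in `Add(𝒜, Ab)`). -/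
def IsProjectiveFunctor (P : 𝒜 ⥤ AddCommGrpCat.{u}) : Prop :=
  ∀ (G H : 𝒜 ⥤ AddCommGrpCat.{u}), G.Additive → H.Additive →
    ∀ (ψ : G ⟶ H), (∀ Z : 𝒜, Function.Surjective (ψ.app Z)) →
    ∀ φ : P ⟶ H, ∃ σ : P ⟶ G, σ ≫ ψ = φ

/-!
`Im(f^*)` is a quotient of the projective functor `Hom(X, -)` via `v ↦ f ≫ v`, so it is projective
iff this quotient map splits. By Yoneda a splitting is determined by the image `α : X ⟶ X` of `f`,
and the conditions on `α` are `f ≫ α = f` together with `f ≫ u = 0 → α ≫ u = 0`. If `f₁` is a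
pseudo-cokernel of `f`, the second condition just says `α ≫ f₁ = 0`; and any `α` satisfying both
conditions makes `𝟙 X - α` a pseudo-cokernel of `f`.
-/

section

omit [HasFiniteBiproducts 𝒜]

def IsPseudoCokernel {Y X X₁ : 𝒜} (f : Y ⟶ X) (f₁ : X ⟶ X₁) : Prop :=
  ∀ (Z : 𝒜) (u : X ⟶ Z), f ≫ u = 0 ↔ ∃ v : X₁ ⟶ Z, u = f₁ ≫ v

theorem IsPseudoCokernel.comp_eq_zero {Y X X₁ : 𝒜} {f : Y ⟶ X} {f₁ : X ⟶ X₁}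
    (h : IsPseudoCokernel f f₁) : f ≫ f₁ = 0 :=
  (h X₁ f₁).mpr ⟨𝟙 X₁, (Category.comp_id f₁).symm⟩

theorem IsPseudoCokernel.kills_iff_comp_eq_zero {Y X X₁ W : 𝒜} {f : Y ⟶ X} {f₁ : X ⟶ X₁}
    (h : IsPseudoCokernel f f₁) (α : W ⟶ X) :
    (∀ (Z : 𝒜) (u : X ⟶ Z), f ≫ u = 0 → α ≫ u = 0) ↔ α ≫ f₁ = 0 := by
  refine ⟨fun hα => hα X₁ f₁ h.comp_eq_zero, fun hα Z u hu => ?_⟩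
  obtain ⟨v, rfl⟩ := (h Z u).mp hu
  rw [← Category.assoc, hα, zero_comp]

theorem isPseudoCokernel_id_sub {Y X : 𝒜} {f : Y ⟶ X} {α : X ⟶ X} (hfα : f ≫ α = f)
    (hα : ∀ (Z : 𝒜) (u : X ⟶ Z), f ≫ u = 0 → α ≫ u = 0) : IsPseudoCokernel f (𝟙 X - α) := by
  intro Z u
  constructor
  · intro hu
    exact ⟨u, by rw [Preadditive.sub_comp, Category.id_comp, hα Z u hu, sub_zero]⟩
  · rintro ⟨v, rfl⟩
    rw [← Category.assoc, Preadditive.comp_sub, Category.comp_id, hfα, sub_self, zero_comp]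

instance imageFunctor_additive {Y X : 𝒜} (f : Y ⟶ X) : (imageFunctor f).Additive where
  map_add {_ _ h h'} := by
    ext u
    exact Subtype.ext (Preadditive.comp_add _ _ _ u.1 h h')

def imageProj {Y X : 𝒜} (f : Y ⟶ X) : preadditiveCoyoneda.obj (op X) ⟶ imageFunctor f where
  app Z := AddCommGrpCat.ofHom <|
    AddMonoidHom.mk' (fun v => ⟨f ≫ v, v, rfl⟩)
      (fun v v' => Subtype.ext (Preadditive.comp_add _ _ _ _ _ _))
  naturality Z Z' h := by
    ext v
    exact Subtype.ext (Category.assoc f v h).symm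

theorem imageProj_app_surjective {Y X : 𝒜} (f : Y ⟶ X) (Z : 𝒜) :
    Function.Surjective ((imageProj f).app Z) := by
  rintro ⟨u, v, rfl⟩
  exact ⟨v, rfl⟩

theorem comp_eq_comp_of_kills {Y X W Z : 𝒜} {f : Y ⟶ X} {α : W ⟶ X}
    (hα : ∀ (Z : 𝒜) (u : X ⟶ Z), f ≫ u = 0 → α ≫ u = 0) {v v' : X ⟶ Z}
    (h : f ≫ v = f ≫ v') : α ≫ v = α ≫ v' := by
  rw [← sub_eq_zero, ← Preadditive.comp_sub]
  exact hα Z _ (by rw [Preadditive.comp_sub, h, sub_self])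

theorem imSet_eq_comp_choose {Y X Z : 𝒜} {f : Y ⟶ X} (u : imSet f Z) : u.1 = f ≫ u.2.choose :=
  u.2.choose_spec

noncomputable def imageSection {Y X : 𝒜} (f : Y ⟶ X) (α : X ⟶ X)
    (hα : ∀ (Z : 𝒜) (u : X ⟶ Z), f ≫ u = 0 → α ≫ u = 0) :
    imageFunctor f ⟶ preadditiveCoyoneda.obj (op X) where
  app Z := AddCommGrpCat.ofHom <|
    AddMonoidHom.mk' (fun u : imSet f Z => α ≫ u.2.choose) fun u u' => by
      refine (comp_eq_comp_of_kills hα ?_).trans (Preadditive.comp_add _ _ _ _ _ _)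
      rw [Preadditive.comp_add, ← imSet_eq_comp_choose, ← imSet_eq_comp_choose,
        ← imSet_eq_comp_choose]
      rfl
  naturality Z Z' h := by
    ext u
    change α ≫ ((imageFunctor f).map h u).2.choose = (α ≫ u.2.choose) ≫ h
    rw [Category.assoc]
    refine comp_eq_comp_of_kills hα ?_
    exact (imSet_eq_comp_choose ((imageFunctor f).map h u)).symm.trans
      ((congrArg (· ≫ h) (imSet_eq_comp_choose u)).trans (Category.assoc _ _ _))

theorem imageSection_comp_imageProj {Y X : 𝒜} {f : Y ⟶ X} {α : X ⟶ X} (hfα : f ≫ α = f)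
    (hα : ∀ (Z : 𝒜) (u : X ⟶ Z), f ≫ u = 0 → α ≫ u = 0) :
    imageSection f α hα ≫ imageProj f = 𝟙 _ := by
  ext Z u
  refine Subtype.ext ?_
  change f ≫ α ≫ u.2.choose = u.1
  rw [← Category.assoc, hfα]
  exact (imSet_eq_comp_choose u).symm

theorem IsProjectiveFunctor.of_retract {P Q : 𝒜 ⥤ AddCommGrpCat.{u}} (i : P ⟶ Q) (r : Q ⟶ P)
    (hir : i ≫ r = 𝟙 P) (hQ : IsProjectiveFunctor Q) : IsProjectiveFunctor P := by
  intro G H hG hH ψ hψ φ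
  obtain ⟨σ, hσ⟩ := hQ G H hG hH ψ hψ (r ≫ φ)
  exact ⟨i ≫ σ, by rw [Category.assoc, hσ, ← Category.assoc, hir, Category.id_comp]⟩

/-- Yoneda: a map `Hom(X, -) ⟶ H` is determined by the image of `𝟙 X`, which can be lifted
along any pointwise surjection. -/
theorem isProjectiveFunctor_preadditiveCoyoneda (X : 𝒜) :
    IsProjectiveFunctor (preadditiveCoyoneda.obj (op X)) := by
  intro G H hG _ ψ hψ φ
  obtain ⟨g, hg⟩ := hψ X (φ.app X (𝟙 X))
  refine ⟨{ app Z := AddCommGrpCat.ofHom <|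
              AddMonoidHom.mk' (fun v : X ⟶ Z => G.map v g) fun (v v' : X ⟶ Z) =>
                congrArg (fun t : G.obj X ⟶ G.obj Z => t g) (G.map_add (f := v) (g := v'))
            naturality Z Z' h := by
              ext (v : X ⟶ Z)
              change G.map (v ≫ h) g = G.map h (G.map v g)
              rw [G.map_comp]
              rfl }, ?_⟩
  ext Z (v : X ⟶ Z)
  change ψ.app Z (G.map v g) = φ.app Z v
  have hψv : ψ.app Z (G.map v g) = H.map v (ψ.app X g) := congrArg (· g) (ψ.naturality v)
  have hφv : H.map v (φ.app X (𝟙 X)) = φ.app Z (𝟙 X ≫ v) :=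
    (congrArg (· (𝟙 X)) (φ.naturality v)).symm
  rw [hψv, hg, hφv, Category.id_comp]

theorem isProjectiveFunctor_imageFunctor_iff {Y X : 𝒜} (f : Y ⟶ X) :
    IsProjectiveFunctor (imageFunctor f) ↔
      ∃ α : X ⟶ X, f ≫ α = f ∧ ∀ (Z : 𝒜) (u : X ⟶ Z), f ≫ u = 0 → α ≫ u = 0 := by
  constructor
  · intro hf
    obtain ⟨σ, hσ⟩ := hf _ _ inferInstance inferInstance (imageProj f)
      (imageProj_app_surjective f) (𝟙 _)
    let e : imageFunctor f |>.obj X := ⟨f, 𝟙 X, (Category.comp_id f).symm⟩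
    refine ⟨σ.app X e, congrArg (fun t => (t.app X e).1) hσ, fun Z u hu => ?_⟩
    have hue : (imageFunctor f).map u e = 0 := Subtype.ext hu
    change (σ.app X ≫ (preadditiveCoyoneda.obj (op X)).map u) e = 0
    rw [← σ.naturality, ConcreteCategory.comp_apply, hue, map_zero]
  · rintro ⟨α, hfα, hα⟩
    exact IsProjectiveFunctor.of_retract _ _ (imageSection_comp_imageProj hfα hα)
      (isProjectiveFunctor_preadditiveCoyoneda X)

end

theorem functor_category_one_hereditary_iff_general (𝒜 : Type u) [SmallCategory 𝒜] [Preadditive 𝒜] :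
    (∀ (Y X : 𝒜) (f : Y ⟶ X), IsProjectiveFunctor (imageFunctor f)) ↔
    ((∀ (Y X : 𝒜) (f : Y ⟶ X), ∃ (X₁ : 𝒜) (f₁ : X ⟶ X₁),
        ∀ (Z : 𝒜) (u : X ⟶ Z), f ≫ u = 0 ↔ ∃ v : X₁ ⟶ Z, u = f₁ ≫ v) ∧
     (∀ (Y X X₁ : 𝒜) (f : Y ⟶ X) (f₁ : X ⟶ X₁),
        (∀ (Z : 𝒜) (u : X ⟶ Z), f ≫ u = 0 ↔ ∃ v : X₁ ⟶ Z, u = f₁ ≫ v) →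
        ∃ α : X ⟶ X, α ≫ f₁ = 0 ∧ f ≫ α = f)) := by
  simp only [isProjectiveFunctor_imageFunctor_iff]
  constructor
  · intro h
    refine ⟨fun Y X f => ?_, fun Y X X₁ f f₁ hf₁ => ?_⟩
    · obtain ⟨α, hfα, hα⟩ := h Y X f
      exact ⟨X, 𝟙 X - α, isPseudoCokernel_id_sub hfα hα⟩
    · obtain ⟨α, hfα, hα⟩ := h Y X f
      exact ⟨α, (IsPseudoCokernel.kills_iff_comp_eq_zero hf₁ α).mp hα, hfα⟩
  · rintro ⟨hcoker, hsplit⟩ Y X f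
    obtain ⟨X₁, f₁, hf₁⟩ := hcoker Y X f
    obtain ⟨α, hα, hfα⟩ := hsplit Y X X₁ f f₁ hf₁
    exact ⟨α, hfα, (IsPseudoCokernel.kills_iff_comp_eq_zero hf₁ α).mpr hα⟩

/-- For a small additive category `𝒜`, the functor category `Add(𝒜, Ab)` is
`1`-hereditary — every finitely presented functor `F = coker(f^*)` has projective dimension
at most `1`, equivalently `Im(f^*)` is projective for every `f` — if and only if
(a) every morphism of `𝒜` has a pseudo-cokernel, and (b) for every `f : Y ⟶ X` with
pseudo-cokernel `f₁ : X ⟶ X₁` there is `α : X ⟶ X` with `f₁ ∘ α = 0` and `α ∘ f = f`. -/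
theorem functor_category_one_hereditary_iff (𝒜 : Type u) [SmallCategory 𝒜] [Preadditive 𝒜]
    [HasFiniteBiproducts 𝒜] :
    (∀ (Y X : 𝒜) (f : Y ⟶ X), IsProjectiveFunctor (imageFunctor f)) ↔
    ((∀ (Y X : 𝒜) (f : Y ⟶ X), ∃ (X₁ : 𝒜) (f₁ : X ⟶ X₁),
        ∀ (Z : 𝒜) (u : X ⟶ Z), f ≫ u = 0 ↔ ∃ v : X₁ ⟶ Z, u = f₁ ≫ v) ∧
     (∀ (Y X X₁ : 𝒜) (f : Y ⟶ X) (f₁ : X ⟶ X₁),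
        (∀ (Z : 𝒜) (u : X ⟶ Z), f ≫ u = 0 ↔ ∃ v : X₁ ⟶ Z, u = f₁ ≫ v) →
        ∃ α : X ⟶ X, α ≫ f₁ = 0 ∧ f ≫ α = f)) :=
  functor_category_one_hereditary_iff_general 𝒜
end

section
/- A ring R with identity is left semi-hereditary if and only if for every matrix A ∈ M_{k×m}(R) there exists a matrix B ∈ M_{t×k}(R) such that: (a) for every row vector X ∈ M_{1×k}(R), XA = 0 iff X = YB for some Y ∈ M_{1×t}(R); and (b) there exists C ∈ M_{k×k}(R) with BC = 0 and CA = A. -/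
/-!
Write `A' : x ↦ x A` for right multiplication by `A` on row vectors. Its image is the submodule
spanned by the rows of `A`, so `R` is left semi-hereditary iff every such image is projective,
i.e. iff the surjection of the free module onto `im A'` splits. A splitting amounts to a matrix
`C` with `C A = A` whose right multiplication kills `ker A'`. Such a `C` is idempotent, and
`B = 1 - C` has row space `ker A'` and satisfies `B C = 0`. Conversely, if `ker A'` is the row
space of `B`, then `B C = 0` makes `x ↦ x C` vanish on `ker A'`.
-/

universe u

/-- A ring `R` is left semi-hereditary if every finitely generated submodule of a finitely
generated free left `R`-module is projective. -/
def IsLeftSemihereditary (R : Type u) [Ring R] : Prop :=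
  ∀ (m : ℕ) (N : Submodule R (Fin m → R)), N.FG → Module.Projective R N

namespace LinearMap

variable {R M N : Type*} [Ring R] [AddCommGroup M] [Module R M] [AddCommGroup N] [Module R N]

theorem projective_range_iff_exists_comp_eq_self [Module.Projective R M] (f : M →ₗ[R] N) :
    Module.Projective R (range f) ↔ ∃ g : M →ₗ[R] M, f ∘ₗ g = f ∧ ker f ≤ ker g := by
  rw [Module.Projective.iff_split_of_projective f.rangeRestrict f.surjective_rangeRestrict]
  constructor
  · rintro ⟨i, hi⟩
    refine ⟨i ∘ₗ f.rangeRestrict, ?_, by rw [← ker_rangeRestrict]; exact ker_le_ker_comp _ _⟩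
    ext x
    simpa using congr_arg Subtype.val (LinearMap.congr_fun hi (f.rangeRestrict x))
  · rintro ⟨g, hfg, hle⟩
    refine ⟨(ker f).liftQ g hle ∘ₗ f.quotKerEquivRange.symm.toLinearMap, ?_⟩
    ext y
    obtain ⟨x, rfl⟩ := f.surjective_rangeRestrict y
    have hx : f.quotKerEquivRange.symm (f.rangeRestrict x) = (ker f).mkQ x :=
      quotKerEquivRange_symm_apply_image f x (f.mem_range_self x)
    simp only [comp_apply, LinearEquiv.coe_coe, hx, Submodule.mkQ_apply, Submodule.liftQ_apply]
    exact LinearMap.congr_fun hfg x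

end LinearMap

namespace Matrix

theorem replicateRow_surjective {α ι n : Type*} [Unique ι] :
    Function.Surjective (replicateRow ι : (n → α) → Matrix ι n α) :=
  fun X => ⟨X default, by ext i j; rw [Unique.eq_default i]; rfl⟩

section Semiring

variable {R : Type*} [Semiring R] {k m t : Type*} [Fintype k] [DecidableEq k] [Fintype t]
  [DecidableEq t]

theorem forall_mul_eq_zero_iff_ker_eq_range {ι : Type*} [Unique ι] (A : Matrix k m R)
    (B : Matrix t k R) :
    (∀ X : Matrix ι k R, X * A = 0 ↔ ∃ Y : Matrix ι t R, X = Y * B) ↔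
      LinearMap.ker A.toLinearMapRight' = LinearMap.range B.toLinearMapRight' := by
  simp only [replicateRow_surjective.forall, replicateRow_surjective.exists,
    ← replicateRow_vecMul, replicateRow_eq_zero, replicateRow_inj, SetLike.ext_iff,
    LinearMap.mem_ker, LinearMap.mem_range, toLinearMapRight'_apply, eq_comm]

theorem ker_le_ker_of_ker_eq_range_of_mul_eq_zero {A : Matrix k m R} {B : Matrix t k R}
    {C : Matrix k k R}
    (hB : LinearMap.ker A.toLinearMapRight' = LinearMap.range B.toLinearMapRight')
    (hBC : B * C = 0) : LinearMap.ker A.toLinearMapRight' ≤ LinearMap.ker C.toLinearMapRight' := by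
  rw [hB, LinearMap.range_le_ker_iff, ← toLinearMapRight'_mul, hBC, map_zero]

end Semiring

section Ring

variable {R : Type*} [Ring R] {k m : Type*} [Fintype k] [DecidableEq k]

theorem projective_range_toLinearMapRight'_iff (A : Matrix k m R) :
    Module.Projective R (LinearMap.range A.toLinearMapRight') ↔
      ∃ C : Matrix k k R, C * A = A ∧
        LinearMap.ker A.toLinearMapRight' ≤ LinearMap.ker C.toLinearMapRight' := by
  simp only [LinearMap.projective_range_iff_exists_comp_eq_self,
    toLinearMapRight'.surjective.exists, ← toLinearMapRight'_mul,
    toLinearMapRight'.injective.eq_iff]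

variable {A : Matrix k m R} {C : Matrix k k R}

theorem range_one_sub_le_ker (hCA : C * A = A) :
    LinearMap.range (1 - C).toLinearMapRight' ≤ LinearMap.ker A.toLinearMapRight' := by
  rw [LinearMap.range_le_ker_iff, ← toLinearMapRight'_mul, Matrix.sub_mul, Matrix.one_mul, hCA, sub_self,
    map_zero]

theorem one_sub_mul_self_eq_zero (hCA : C * A = A)
    (hle : LinearMap.ker A.toLinearMapRight' ≤ LinearMap.ker C.toLinearMapRight') :
    (1 - C) * C = 0 := by
  have h := LinearMap.range_le_ker_iff.1 ((range_one_sub_le_ker hCA).trans hle)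
  rwa [← toLinearMapRight'_mul, toLinearMapRight'.map_eq_zero_iff] at h

theorem ker_eq_range_one_sub (hCA : C * A = A)
    (hle : LinearMap.ker A.toLinearMapRight' ≤ LinearMap.ker C.toLinearMapRight') :
    LinearMap.ker A.toLinearMapRight' = LinearMap.range (1 - C).toLinearMapRight' := by
  refine le_antisymm (fun x hx => ⟨x, ?_⟩) (range_one_sub_le_ker hCA)
  have hxC : x ᵥ* C = 0 := hle hx
  rw [toLinearMapRight'_apply, vecMul_sub, vecMul_one, hxC, sub_zero]

theorem exists_ker_eq_range_iff {n : ℕ} (A : Matrix (Fin n) m R) :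
    (∃ (t : ℕ) (B : Matrix (Fin t) (Fin n) R),
        LinearMap.ker A.toLinearMapRight' = LinearMap.range B.toLinearMapRight' ∧
          ∃ C : Matrix (Fin n) (Fin n) R, B * C = 0 ∧ C * A = A) ↔
      ∃ C : Matrix (Fin n) (Fin n) R, C * A = A ∧
        LinearMap.ker A.toLinearMapRight' ≤ LinearMap.ker C.toLinearMapRight' := by
  constructor
  · rintro ⟨t, B, hB, C, hBC, hCA⟩
    exact ⟨C, hCA, ker_le_ker_of_ker_eq_range_of_mul_eq_zero hB hBC⟩
  · rintro ⟨C, hCA, hle⟩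
    exact ⟨n, 1 - C, ker_eq_range_one_sub hCA hle, C, one_sub_mul_self_eq_zero hCA hle, hCA⟩

end Ring

end Matrix

theorem isLeftSemihereditary_iff_projective_range_toLinearMapRight' (R : Type u) [Ring R] :
    IsLeftSemihereditary R ↔ ∀ (k m : ℕ) (A : Matrix (Fin k) (Fin m) R),
      Module.Projective R (LinearMap.range A.toLinearMapRight') := by
  refine ⟨fun hR k m A => hR m _ (Submodule.fg_range _), fun h m N hN => ?_⟩
  obtain ⟨k, v, rfl⟩ := Submodule.fg_iff_exists_fin_generating_family.mp hN
  have hv : LinearMap.range (Matrix.of v).toLinearMapRight' = Submodule.span R (Set.range v) :=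
    range_vecMulLinear _
  exact hv ▸ h k m (Matrix.of v)

/-- A ring `R` with identity is left semi-hereditary if and only if for every
matrix `A ∈ M_{k×m}(R)` there is a matrix `B ∈ M_{t×k}(R)` such that (a) a row vector `X`
satisfies `XA = 0` iff `X = YB` for some row vector `Y`, and (b) there is `C ∈ M_{k×k}(R)`
with `BC = 0` and `CA = A`. -/
theorem isLeftSemihereditary_iff_matrix_condition (R : Type u) [Ring R] :
    IsLeftSemihereditary R ↔
    ∀ (k m : ℕ) (A : Matrix (Fin k) (Fin m) R),
      ∃ (t : ℕ) (B : Matrix (Fin t) (Fin k) R),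
        (∀ X : Matrix (Fin 1) (Fin k) R,
          X * A = 0 ↔ ∃ Y : Matrix (Fin 1) (Fin t) R, X = Y * B) ∧
        ∃ Cm : Matrix (Fin k) (Fin k) R, B * Cm = 0 ∧ Cm * A = A := by
  simp_rw [Matrix.forall_mul_eq_zero_iff_ker_eq_range, Matrix.exists_ker_eq_range_iff,
    ← Matrix.projective_range_toLinearMapRight'_iff]
  exact isLeftSemihereditary_iff_projective_range_toLinearMapRight' R
end
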